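/- arXiv:math/0505295 — 18 statements merged into one kernel-verified Lean document; each statement's English description precedes it below -/
import Mathlib

section
/- Let n ≥ 1 be a natural number and let m be any natural number with 2^m > n. Then, as an identity of integers, 2·s(n) = 2^{m+1} − 1 − Σ_{k=0}^{m} (−1)^{⌊(n+k)/2^k⌋} · 2^k. -/
/-- The sloping binary number `s n`: `n` plus the sum of `2^k` over all `k ≥ 1`
with `n + k ≡ 0 (mod 2^k)`. All such `k` satisfy `k ≤ n`, so the sum is finite. -/
def s (n : ℕ) : ℕ := n + ∑ k ∈ Finset.Icc 1 n, if 2 ^ k ∣ (n + k) then 2 ^ k else 0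

lemma succ_mod (x M : ℕ) (hM : 0 < M) :
    (x + 1) % M + (if M ∣ (x + 1) then M else 0) = x % M + 1 := by
  by_cases h : M ∣ (x + 1)
  · rw [if_pos h]
    have h0 : (x + 1) % M = 0 := Nat.mod_eq_zero_of_dvd h
    obtain ⟨q, hq⟩ := h
    match q with
    | 0 => omega
    | q + 1 =>
      rw [Nat.mul_succ] at hq
      have hxm : x % M = M - 1 := by
        have hx : x = M * q + (M - 1) := by omega
        rw [hx, Nat.mul_add_mod, Nat.mod_eq_of_lt (by omega)]
      omega
  · rw [if_neg h]
    have hlt : x % M < M := Nat.mod_lt _ hM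
    have hne : x % M + 1 ≠ M := by
      intro hEq
      apply h
      have hdm := Nat.div_add_mod x M
      exact ⟨x / M + 1, by rw [Nat.mul_succ]; omega⟩
    have heq : (x + 1) % M = x % M + 1 := by
      conv_lhs => rw [← Nat.div_add_mod x M]
      rw [Nat.add_assoc, Nat.mul_add_mod, Nat.mod_eq_of_lt (by omega)]
    omega

lemma two_mul_le_two_pow : ∀ j : ℕ, 1 ≤ j → 2 * j ≤ 2 ^ j := by
  intro j hj
  induction j with
  | zero => omega
  | succ k ih =>
    rcases Nat.eq_or_lt_of_le hj with h | h
    · simp [← h]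
    · have hk : 1 ≤ k := by omega
      have := ih hk
      have : 2 ^ k ≥ 2 := by
        calc 2 ^ k ≥ 2 * k := by omega
        _ ≥ 2 := by omega
      rw [pow_succ]
      omega

lemma key (n : ℕ) : ∀ m : ℕ,
    (∑ k ∈ Finset.range m, ((n + k) / 2 ^ k % 2) * 2 ^ k) + m
      = (n + m) % 2 ^ m + ∑ k ∈ Finset.Icc 1 m, (if 2 ^ k ∣ (n + k) then 2 ^ k else 0)
  | 0 => by simp [Nat.mod_one]
  | m + 1 => by
    rw [Finset.sum_range_succ, Finset.sum_Icc_succ_top (by omega : 1 ≤ m + 1)]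
    have ih := key n m
    have hsplit : (n + m) % 2 ^ (m + 1) = (n + m) % 2 ^ m + ((n + m) / 2 ^ m % 2) * 2 ^ m := by
      rw [pow_succ, Nat.mod_mul]; ring
    have hsucc := succ_mod (n + m) (2 ^ (m + 1)) (by positivity)
    rw [show n + (m + 1) = (n + m) + 1 from by ring] at *
    set A := ∑ k ∈ Finset.range m, ((n + k) / 2 ^ k % 2) * 2 ^ k with hA
    set I := ∑ k ∈ Finset.Icc 1 m, (if 2 ^ k ∣ (n + k) then 2 ^ k else 0) with hI
    set B := ((n + m) / 2 ^ m % 2) * 2 ^ m with hB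
    set C := if 2 ^ (m + 1) ∣ (n + m + 1) then 2 ^ (m + 1) else 0 with hC
    omega

lemma icc_sum_eq (n m : ℕ) (hn : 1 ≤ n) (hm : n < 2 ^ m) :
    ∑ k ∈ Finset.Icc 1 (m + 1), (if 2 ^ k ∣ (n + k) then 2 ^ k else 0)
      = ∑ k ∈ Finset.Icc 1 n, (if 2 ^ k ∣ (n + k) then 2 ^ k else 0) := by
  have h1 : ∑ k ∈ Finset.Icc 1 (m + 1), (if 2 ^ k ∣ (n + k) then 2 ^ k else 0)
      = ∑ k ∈ Finset.Icc 1 (max n (m + 1)), (if 2 ^ k ∣ (n + k) then 2 ^ k else 0) := by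
    apply Finset.sum_subset (Finset.Icc_subset_Icc_right (le_max_right _ _))
    intro x hx hx'
    simp only [Finset.mem_Icc] at hx hx'
    rw [if_neg]
    intro hd
    have hle : 2 ^ x ≤ n + x := Nat.le_of_dvd (by omega) hd
    have h2 : 2 ^ (m + 1) ≤ 2 ^ x := Nat.pow_le_pow_right (by norm_num) (by omega)
    have h3 : 2 ^ (m + 1) = 2 * 2 ^ m := by rw [pow_succ]; ring
    -- x > m + 1, and x ≤ max n (m+1), so x ≤ n; then 2^x ≤ n + x ≤ 2n < 2^(m+1) ≤ 2^x
    have hxn : x ≤ n := by omega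
    omega
  have h2 : ∑ k ∈ Finset.Icc 1 n, (if 2 ^ k ∣ (n + k) then 2 ^ k else 0)
      = ∑ k ∈ Finset.Icc 1 (max n (m + 1)), (if 2 ^ k ∣ (n + k) then 2 ^ k else 0) := by
    apply Finset.sum_subset (Finset.Icc_subset_Icc_right (le_max_left _ _))
    intro x hx hx'
    simp only [Finset.mem_Icc] at hx hx'
    rw [if_neg]
    intro hd
    have hle : 2 ^ x ≤ n + x := Nat.le_of_dvd (by omega) hd
    have h2 : 2 * x ≤ 2 ^ x := two_mul_le_two_pow x (by omega)
    omega
  rw [h1, h2]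

theorem sloping_formula (n m : ℕ) (hn : 1 ≤ n) (hm : n < 2 ^ m) :
    (2 * s n : ℤ) =
      2 ^ (m + 1) - 1 - ∑ k ∈ Finset.range (m + 1), (-1 : ℤ) ^ ((n + k) / 2 ^ k) * 2 ^ k := by
  have hkey := key n (m + 1)
  have hmod : (n + (m + 1)) % 2 ^ (m + 1) = n + (m + 1) := by
    apply Nat.mod_eq_of_lt
    have h1 : m < 2 ^ m := Nat.lt_two_pow_self
    have h2 : 2 ^ (m + 1) = 2 * 2 ^ m := by rw [pow_succ]; ring
    omega
  have hicc := icc_sum_eq n m hn hm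
  have hsum : ∑ k ∈ Finset.range (m + 1), ((n + k) / 2 ^ k % 2) * 2 ^ k = s n := by
    have hs : s n = n + ∑ k ∈ Finset.Icc 1 n, (if 2 ^ k ∣ (n + k) then 2 ^ k else 0) := rfl
    omega
  have hgeom : ∑ k ∈ Finset.range (m + 1), (2 : ℤ) ^ k = 2 ^ (m + 1) - 1 := by
    induction m + 1 with
    | zero => simp
    | succ j ih => rw [Finset.sum_range_succ, ih]; ring
  calc (2 * s n : ℤ)
      = 2 * ∑ k ∈ Finset.range (m + 1), (((n + k) / 2 ^ k % 2 : ℕ) : ℤ) * 2 ^ k := by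
        rw [← hsum]; push_cast; ring
    _ = ∑ k ∈ Finset.range (m + 1), ((2 : ℤ) ^ k - (-1 : ℤ) ^ ((n + k) / 2 ^ k) * 2 ^ k) := by
        rw [Finset.mul_sum]
        apply Finset.sum_congr rfl
        intro k _
        rcases Nat.even_or_odd ((n + k) / 2 ^ k) with he | he
        · rw [he.neg_one_pow]
          rw [Nat.even_iff] at he
          rw [he]
          push_cast; ring
        · rw [he.neg_one_pow]
          rw [Nat.odd_iff] at he
          rw [he]
          push_cast; ring
    _ = 2 ^ (m + 1) - 1 - ∑ k ∈ Finset.range (m + 1), (-1 : ℤ) ^ ((n + k) / 2 ^ k) * 2 ^ k := by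
        rw [Finset.sum_sub_distrib, hgeom]
end

section
/- The sloping binary numbers satisfy the recurrence s(0) = 0 and, for all i ≥ 0 and all j with 0 ≤ j ≤ 2^i − 1: s(2^i + j) = 2^i + s(j) if j ≠ 2^i − i − 1, and s(2^i + j) = 3·2^i + s(j) if j = 2^i − i − 1. -/
lemma klt (j k : ℕ) (h : j < k) : ¬ 2 ^ k ∣ (j + k) := by
  have h1 : k - 1 < 2 ^ (k - 1) := Nat.lt_two_pow_self
  have h2 : 2 ^ k = 2 ^ (k - 1) * 2 := by
    rw [← pow_succ]; congr 1; omega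
  intro hd
  have := Nat.le_of_dvd (by omega) hd
  omega

lemma key_s1 (i j : ℕ) (hj : j < 2 ^ i) :
    s (2 ^ i + j) = 2 ^ i + s j + (if j = 2 ^ i - i - 1 then 2 ^ (i + 1) else 0) := by
  have hi : i < 2 ^ i := Nat.lt_two_pow_self (n := i)
  set n := 2 ^ i + j with hn
  have hstep : ∀ k ∈ Finset.Icc 1 n,
      (if 2 ^ k ∣ (n + k) then 2 ^ k else 0) =
      (if 2 ^ k ∣ (j + k) then 2 ^ k else 0)
      + (if k = i + 1 then (if j = 2 ^ i - i - 1 then 2 ^ (i + 1) else 0) else 0) := by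
    intro k hk
    rcases lt_trichotomy k (i + 1) with hki | hki | hki
    · have hdvd : (2 : ℕ) ^ k ∣ 2 ^ i := pow_dvd_pow 2 (by omega)
      have hiff : (2 ^ k ∣ n + k) ↔ (2 ^ k ∣ j + k) := by
        rw [hn, add_assoc]
        exact Nat.dvd_add_right hdvd
      rw [if_neg (show ¬ k = i + 1 by omega), add_zero]
      exact if_congr hiff rfl rfl
    · subst hki
      have h4 : (2 : ℕ) ^ (i + 1) = 2 * 2 ^ i := by ring
      have hnd : ¬ 2 ^ (i + 1) ∣ (j + (i + 1)) := by
        intro hd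
        have := Nat.le_of_dvd (by omega) hd
        omega
      have hiff : (2 ^ (i + 1) ∣ n + (i + 1)) ↔ j = 2 ^ i - i - 1 := by
        constructor
        · rintro ⟨t, ht⟩
          have ht1 : t = 1 := by
            rcases Nat.lt_or_ge t 2 with h' | h'
            · interval_cases t
              · rw [mul_zero] at ht; omega
              · rfl
            · exfalso
              have hmul : 2 ^ (i + 1) * 2 ≤ 2 ^ (i + 1) * t := Nat.mul_le_mul_left _ h'
              omega
          rw [ht1, mul_one] at ht
          omega
        · intro h
          exact ⟨1, by rw [mul_one]; omega⟩
      by_cases hc : j = 2 ^ i - i - 1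
      · rw [if_pos (hiff.mpr hc), if_neg hnd, if_pos rfl, if_pos hc, zero_add]
      · rw [if_neg (fun h => hc (hiff.mp h)), if_neg hnd, if_pos rfl, if_neg hc]
    · have h1 : k - 1 < 2 ^ (k - 1) := Nat.lt_two_pow_self
      have h2 : 2 ^ k = 2 ^ (k - 1) * 2 := by
        rw [← pow_succ]; congr 1; omega
      have h3 : 2 ^ (i + 1) ≤ 2 ^ (k - 1) := Nat.pow_le_pow_right (by norm_num) (by omega)
      have h4 : (2 : ℕ) ^ (i + 1) = 2 * 2 ^ i := by ring
      have hnd1 : ¬ 2 ^ k ∣ (n + k) := by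
        intro hd
        have := Nat.le_of_dvd (by omega) hd
        omega
      have hnd2 : ¬ 2 ^ k ∣ (j + k) := by
        intro hd
        have := Nat.le_of_dvd (by omega) hd
        omega
      rw [if_neg hnd1, if_neg hnd2, if_neg (show ¬ k = i + 1 by omega)]
  have hsum : (∑ k ∈ Finset.Icc 1 n, if 2 ^ k ∣ (n + k) then 2 ^ k else 0)
      = (∑ k ∈ Finset.Icc 1 n, if 2 ^ k ∣ (j + k) then 2 ^ k else 0)
      + (if j = 2 ^ i - i - 1 then 2 ^ (i + 1) else 0) := by
    rw [Finset.sum_congr rfl hstep, Finset.sum_add_distrib]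
    congr 1
    rw [Finset.sum_ite_eq' (Finset.Icc 1 n) (i + 1)
      (fun _ => if j = 2 ^ i - i - 1 then 2 ^ (i + 1) else 0)]
    rw [if_pos (by simp only [Finset.mem_Icc]; omega)]
  have hext : (∑ k ∈ Finset.Icc 1 n, if 2 ^ k ∣ (j + k) then 2 ^ k else 0)
      = ∑ k ∈ Finset.Icc 1 j, if 2 ^ k ∣ (j + k) then 2 ^ k else 0 := by
    symm
    apply Finset.sum_subset
    · exact Finset.Icc_subset_Icc_right (by omega)
    · intro k hk hk'
      simp only [Finset.mem_Icc] at hk hk'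
      rw [if_neg (klt j k (by omega))]
  simp only [s]
  rw [hsum, hext]
  omega

theorem sloping_recurrence :
    s 0 = 0 ∧ ∀ i j : ℕ, j ≤ 2 ^ i - 1 →
      (j ≠ 2 ^ i - i - 1 → s (2 ^ i + j) = 2 ^ i + s j) ∧
      (j = 2 ^ i - i - 1 → s (2 ^ i + j) = 3 * 2 ^ i + s j) := by
  constructor
  · simp [s]
  · intro i j hj
    have hpos : 0 < 2 ^ i := Nat.pow_pos (by norm_num)
    have hj' : j < 2 ^ i := by omega
    constructor
    · intro hne
      rw [key_s1 i j hj', if_neg hne, add_zero]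
    · intro he
      rw [key_s1 i j hj', if_pos he]
      have : (2 : ℕ) ^ (i + 1) = 2 * 2 ^ i := by ring
      omega
end

section
/- The map n ↦ s(n) on the natural numbers is injective, and s(n) ≥ n for all n ≥ 0. -/
lemma term_zero {n k : ℕ} (h : n < k) : ¬ 2 ^ k ∣ (n + k) := by
  intro hd
  have h1 : 0 < n + k := by omega
  have h2 : 2 ^ k ≤ n + k := Nat.le_of_dvd h1 hd
  have h3 : k ≤ 2 ^ (k - 1) := by
    have := Nat.lt_two_pow_self (n := k - 1); omega
  have h4 : 2 ^ k = 2 * 2 ^ (k - 1) := by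
    rw [← pow_succ']; congr 1; omega
  omega

lemma s_decomp (n m N : ℕ) (hn : n ≤ N) (hm : m ≤ N) :
    ∃ E, 2 ^ (m + 1) ∣ E ∧
      s n = n + (∑ k ∈ Finset.Icc 1 m, if 2 ^ k ∣ (n + k) then 2 ^ k else (0:ℕ)) + E := by
  refine ⟨∑ k ∈ Finset.Ioc m N, if 2 ^ k ∣ (n + k) then 2 ^ k else (0:ℕ), ?_, ?_⟩
  · apply Finset.dvd_sum
    intro k hk
    rw [Finset.mem_Ioc] at hk
    split
    · exact pow_dvd_pow 2 (by omega)
    · exact dvd_zero _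
  · have hIcc : ∀ j : ℕ, Finset.Icc 1 j = Finset.Ioc 0 j := fun j => rfl
    have h1 : (∑ k ∈ Finset.Ioc 0 n, if 2 ^ k ∣ (n + k) then 2 ^ k else (0:ℕ))
        + (∑ k ∈ Finset.Ioc n N, if 2 ^ k ∣ (n + k) then 2 ^ k else (0:ℕ))
        = ∑ k ∈ Finset.Ioc 0 N, if 2 ^ k ∣ (n + k) then 2 ^ k else (0:ℕ) :=
      Finset.sum_Ioc_consecutive _ (Nat.zero_le n) hn
    have h2 : (∑ k ∈ Finset.Ioc 0 m, if 2 ^ k ∣ (n + k) then 2 ^ k else (0:ℕ))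
        + (∑ k ∈ Finset.Ioc m N, if 2 ^ k ∣ (n + k) then 2 ^ k else (0:ℕ))
        = ∑ k ∈ Finset.Ioc 0 N, if 2 ^ k ∣ (n + k) then 2 ^ k else (0:ℕ) :=
      Finset.sum_Ioc_consecutive _ (Nat.zero_le m) hm
    have h3 : (∑ k ∈ Finset.Ioc n N, if 2 ^ k ∣ (n + k) then 2 ^ k else (0:ℕ)) = 0 := by
      apply Finset.sum_eq_zero
      intro k hk
      rw [Finset.mem_Ioc] at hk
      exact if_neg (term_zero hk.1)
    rw [s, hIcc, hIcc]
    omega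

lemma step (a b m : ℕ) (hs : s a = s b) (h : a ≡ b [MOD 2 ^ m]) :
    a ≡ b [MOD 2 ^ (m + 1)] := by
  set N := max (max a b) m with hN
  obtain ⟨Ea, hEa, ha⟩ := s_decomp a m N (by omega) (by omega)
  obtain ⟨Eb, hEb, hb⟩ := s_decomp b m N (by omega) (by omega)
  have hT : (∑ k ∈ Finset.Icc 1 m, if 2 ^ k ∣ (a + k) then 2 ^ k else (0:ℕ))
      = ∑ k ∈ Finset.Icc 1 m, if 2 ^ k ∣ (b + k) then 2 ^ k else (0:ℕ) := by
    apply Finset.sum_congr rfl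
    intro k hk
    rw [Finset.mem_Icc] at hk
    have hdk : (2 : ℕ) ^ k ∣ 2 ^ m := pow_dvd_pow 2 hk.2
    have hmod : a ≡ b [MOD 2 ^ k] := h.of_dvd hdk
    have : (2 ^ k ∣ (a + k)) ↔ (2 ^ k ∣ (b + k)) := by
      have hab : a + k ≡ b + k [MOD 2 ^ k] := hmod.add_right k
      constructor
      · intro hd
        have := (Nat.modEq_zero_iff_dvd.mpr hd).symm.trans hab
        exact Nat.modEq_zero_iff_dvd.mp this.symm
      · intro hd
        have := (Nat.modEq_zero_iff_dvd.mpr hd).symm.trans hab.symm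
        exact Nat.modEq_zero_iff_dvd.mp this.symm
    simp only [this]
  set T := ∑ k ∈ Finset.Icc 1 m, if 2 ^ k ∣ (b + k) then 2 ^ k else (0:ℕ)
  rw [hT] at ha
  have key : a + T + Ea = b + T + Eb := by rw [← ha, ← hb, hs]
  have hE : Ea ≡ Eb [MOD 2 ^ (m + 1)] :=
    (Nat.modEq_zero_iff_dvd.mpr hEa).trans (Nat.modEq_zero_iff_dvd.mpr hEb).symm
  have h2 : a + T + Ea ≡ b + T + Eb [MOD 2 ^ (m + 1)] := by rw [key]
  exact Nat.ModEq.add_right_cancel' T (Nat.ModEq.add_right_cancel hE h2)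

theorem sloping_injective_and_ge : Function.Injective s ∧ ∀ n : ℕ, n ≤ s n := by
  constructor
  · intro a b hs
    have key : ∀ m, a ≡ b [MOD 2 ^ m] := by
      intro m
      induction m with
      | zero => simp [Nat.ModEq, Nat.mod_one]
      | succ m ih => exact step a b m hs ih
    have h := key (a + b + 1)
    have ha : a < 2 ^ (a + b + 1) :=
      lt_of_lt_of_le (Nat.lt_two_pow_self (n := a)) (Nat.pow_le_pow_right (by norm_num) (by omega))
    have hb : b < 2 ^ (a + b + 1) :=
      lt_of_lt_of_le (Nat.lt_two_pow_self (n := b)) (Nat.pow_le_pow_right (by norm_num) (by omega))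
    have := h
    unfold Nat.ModEq at this
    rw [Nat.mod_eq_of_lt ha, Nat.mod_eq_of_lt hb] at this
    exact this
  · intro n
    exact Nat.le_add_right _ _
end

section
/- Let n ≥ 1 be a natural number and let m = ⌊log₂ n⌋. Then, as an identity of integers, 2·d(n) = 2^{m+1} − 1 − Σ_{k=0}^{m} (−1)^{⌊(n−k)/2^k⌋} · 2^k (note that n − k ≥ 0 for all 0 ≤ k ≤ m). -/
/-- The downward-sloping binary number `d n`: `n` minus the sum of `2^k` over all
`k` with `1 ≤ k ≤ log₂ n` such that `n ≡ k - 1 (mod 2^k)` (note `k - 1 < 2^k`). -/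
def d (n : ℕ) : ℕ :=
  n - ∑ k ∈ Finset.Icc 1 (Nat.log 2 n), if n % 2 ^ k = k - 1 then 2 ^ k else 0

namespace DownAux

lemma mod_pow_succ (n k : ℕ) :
    n % 2 ^ (k + 1) = n % 2 ^ k + 2 ^ k * (n / 2 ^ k % 2) := by
  have h1 : n % (2 ^ k * 2) / 2 ^ k = n / 2 ^ k % 2 :=
    Nat.mod_mul_right_div_self n (2 ^ k) 2
  have h2 : n % (2 ^ k * 2) % 2 ^ k = n % 2 ^ k := Nat.mod_mod_of_dvd n ⟨2, rfl⟩
  have h3 := Nat.div_add_mod (n % (2 ^ k * 2)) (2 ^ k)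
  rw [pow_succ, ← h3, h1, h2]; ring

lemma sum_bits : ∀ (N n : ℕ), n < 2 ^ N →
    ∑ k ∈ Finset.range N, (n / 2 ^ k % 2) * 2 ^ k = n := by
  intro N
  induction N with
  | zero => intro n h; simpa using by omega
  | succ N ih =>
    intro n h
    rw [Finset.sum_range_succ']
    have step : ∀ k, n / 2 ^ (k + 1) % 2 * 2 ^ (k + 1)
        = 2 * ((n / 2) / 2 ^ k % 2 * 2 ^ k) := by
      intro k
      have hd : n / 2 ^ (k + 1) = n / 2 / 2 ^ k := by
        rw [Nat.div_div_eq_div_mul, ← pow_succ']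
      rw [hd, pow_succ]; ring
    simp only [step]
    rw [← Finset.mul_sum, ih (n / 2) (by rw [pow_succ] at h; omega)]
    simp; omega

/-- indicator that the low `k` bits of `n` represent a number `< k` -/
def c (n k : ℕ) : ℤ := if n % 2 ^ k < k then 1 else 0

/-- indicator that `k ≥ 1` and `n % 2^k = k - 1` -/
def e (n k : ℕ) : ℤ := if 1 ≤ k ∧ n % 2 ^ k = k - 1 then 1 else 0

lemma step (n k : ℕ) :
    c n (k + 1) = c n k + e n (k + 1) - (n / 2 ^ k % 2 : ℕ) * c n k := by
  have hm := mod_pow_succ n k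
  have hr : n % 2 ^ k < 2 ^ k := Nat.mod_lt _ (by positivity)
  have hk : k < 2 ^ k := (Nat.lt_two_pow_self (n := k))
  have hb : n / 2 ^ k % 2 = 0 ∨ n / 2 ^ k % 2 = 1 := by omega
  unfold c e
  rcases hb with hb | hb <;> simp only [hb] at hm ⊢ <;> split_ifs <;> push_cast <;> omega

lemma div_sub' (p q r k : ℕ) (hp : 0 < p) (hkp : k < p) (hr : r < p) (hq : 1 ≤ q) :
    (p * q + r - k) / p = q - (if r < k then 1 else 0) := by
  have hpq : p ≤ p * q := Nat.le_mul_of_pos_right p hq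
  split_ifs with h
  · have hmul : p * (q - 1) = p * q - p := by rw [Nat.mul_sub, Nat.mul_one]
    have hdec : p * q + r - k = p * (q - 1) + (p + r - k) := by omega
    rw [hdec, Nat.mul_add_div hp, Nat.div_eq_of_lt (by omega)]
    omega
  · have hdec : p * q + r - k = p * q + (r - k) := by omega
    rw [hdec, Nat.mul_add_div hp, Nat.div_eq_of_lt (by omega)]
    omega

lemma div_sub (n k : ℕ) (h2k : 2 ^ k ≤ n) :
    (n - k) / 2 ^ k = n / 2 ^ k - (if n % 2 ^ k < k then 1 else 0) := by
  have hq1 : 1 ≤ n / 2 ^ k := by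
    rw [Nat.le_div_iff_mul_le (by positivity)]; simpa using h2k
  have h := div_sub' (2 ^ k) (n / 2 ^ k) (n % 2 ^ k) k (by positivity)
    ((Nat.lt_two_pow_self (n := k))) (Nat.mod_lt _ (by positivity)) hq1
  rwa [Nat.div_add_mod] at h

lemma bterm (n k : ℕ) (h2k : 2 ^ k ≤ n) :
    ((n - k) / 2 ^ k % 2 : ℕ) * (2 : ℤ) ^ k
      = (n / 2 ^ k % 2 : ℕ) * 2 ^ k
        + (1 - 2 * (n / 2 ^ k % 2 : ℕ)) * c n k * 2 ^ k := by
  have hd := div_sub n k h2k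
  have hq1 : 1 ≤ n / 2 ^ k := by
    rw [Nat.le_div_iff_mul_le (by positivity)]; simpa using h2k
  unfold c
  split_ifs with h
  · rw [hd, if_pos h]
    have hpar : (((n / 2 ^ k - 1) % 2 : ℕ) : ℤ)
        = 1 - ((n / 2 ^ k % 2 : ℕ) : ℤ) := by omega
    rw [hpar]; push_cast; ring
  · rw [hd, if_neg h]
    simp

lemma neg_one_pow_eq (t : ℕ) : (-1 : ℤ) ^ t = 1 - 2 * (t % 2 : ℕ) := by
  rcases Nat.even_or_odd t with h | h
  · rw [h.neg_one_pow, Nat.even_iff.mp h]; norm_num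
  · rw [h.neg_one_pow, Nat.odd_iff.mp h]; norm_num

lemma geom (N : ℕ) : ∑ k ∈ Finset.range N, (2 : ℤ) ^ k = 2 ^ N - 1 := by
  induction N with
  | zero => simp
  | succ N ih => rw [Finset.sum_range_succ, ih]; ring

lemma tele (n k : ℕ) :
    (1 - 2 * ((n / 2 ^ k % 2 : ℕ) : ℤ)) * c n k * 2 ^ k
      = ((fun j => c n j * 2 ^ j) (k + 1) - (fun j => c n j * 2 ^ j) k)
        - ((fun j => e n j * 2 ^ j) (k + 1) - (fun j => e n j * 2 ^ j) k)
        - e n k * 2 ^ k := by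
  simp only
  rw [step n k]; ring

end DownAux

theorem downward_formula' (n : ℕ) (hn : 1 ≤ n) :
    (2 * (n - ∑ k ∈ Finset.Icc 1 (Nat.log 2 n), if n % 2 ^ k = k - 1 then 2 ^ k else 0 : ℕ) : ℤ) =
      2 ^ (Nat.log 2 n + 1) - 1 -
        ∑ k ∈ Finset.range (Nat.log 2 n + 1), (-1 : ℤ) ^ ((n - k) / 2 ^ k) * 2 ^ k := by
  open DownAux Finset in
  set m := Nat.log 2 n with hm
  have hlt : n < 2 ^ (m + 1) := Nat.lt_pow_succ_log_self (by norm_num) n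
  have h2m : 2 ^ m ≤ n := Nat.pow_log_le_self 2 (by omega)
  have hmod : n % 2 ^ (m + 1) = n := Nat.mod_eq_of_lt hlt
  have hmlt : m < n := lt_of_lt_of_le (Nat.lt_two_pow_self (n := m)) h2m
  have hc0 : c n 0 = 0 := by simp [c]
  have he0 : e n 0 = 0 := by simp [e]
  have hcm : c n (m + 1) = 0 := by
    simp only [c, hmod]; rw [if_neg (by omega)]
  have hem : e n (m + 1) = 0 := by
    simp only [e, hmod]; rw [if_neg (by omega)]
  have hsumtele :
      ∑ k ∈ range (m + 1), (1 - 2 * ((n / 2 ^ k % 2 : ℕ) : ℤ)) * c n k * 2 ^ k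
        = - ∑ k ∈ range (m + 1), e n k * 2 ^ k := by
    rw [Finset.sum_congr rfl fun k _ => tele n k]
    rw [Finset.sum_sub_distrib, Finset.sum_sub_distrib,
      Finset.sum_range_sub (fun j => c n j * 2 ^ j),
      Finset.sum_range_sub (fun j => e n j * 2 ^ j)]
    simp only [hc0, he0, hcm, hem]
    ring
  have hbits : ∑ k ∈ range (m + 1), ((n / 2 ^ k % 2 : ℕ) : ℤ) * 2 ^ k = n := by
    exact_mod_cast congrArg (Nat.cast : ℕ → ℤ) (sum_bits (m + 1) n hlt)
  have hB : ∑ k ∈ range (m + 1), (((n - k) / 2 ^ k % 2 : ℕ) : ℤ) * 2 ^ k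
      = n - ∑ k ∈ range (m + 1), e n k * 2 ^ k := by
    rw [Finset.sum_congr rfl fun k hk =>
      bterm n k (le_trans (Nat.pow_le_pow_right (by norm_num)
        (by have := Finset.mem_range.mp hk; omega)) h2m)]
    rw [Finset.sum_add_distrib, hbits, hsumtele]
    ring
  set S : ℕ := ∑ k ∈ Finset.Icc 1 m, if n % 2 ^ k = k - 1 then 2 ^ k else 0 with hSdef
  have hScast : (S : ℤ) = ∑ k ∈ range (m + 1), e n k * 2 ^ k := by
    have h1 : (S : ℤ) = ∑ k ∈ Finset.Icc 1 m, e n k * 2 ^ k := by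
      rw [hSdef, Nat.cast_sum]
      refine Finset.sum_congr rfl fun k hk => ?_
      have h1k : 1 ≤ k := (Finset.mem_Icc.mp hk).1
      unfold e
      by_cases hcond : n % 2 ^ k = k - 1
      · rw [if_pos hcond, if_pos ⟨h1k, hcond⟩, one_mul]; push_cast; ring
      · rw [if_neg hcond, if_neg (by tauto)]; simp
    rw [h1]
    refine Finset.sum_subset (fun x hx => Finset.mem_range.mpr ?_) (fun x hx hnx => ?_)
    · have := (Finset.mem_Icc.mp hx).2; omega
    · have hx1 := Finset.mem_range.mp hx
      have : x = 0 := by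
        rcases Finset.mem_Icc.not.mp hnx with h
        omega
      rw [this]; simp [e]
  have hBnn : 0 ≤ ∑ k ∈ range (m + 1), (((n - k) / 2 ^ k % 2 : ℕ) : ℤ) * 2 ^ k := by
    refine Finset.sum_nonneg fun k _ => ?_
    positivity
  have hle : S ≤ n := by
    have h2 : (S : ℤ) ≤ n := by rw [hScast]; linarith [hB, hBnn]
    exact_mod_cast h2
  have hneg : ∑ k ∈ range (m + 1), (-1 : ℤ) ^ ((n - k) / 2 ^ k) * 2 ^ k
      = ∑ k ∈ range (m + 1), (1 - 2 * (((n - k) / 2 ^ k % 2 : ℕ) : ℤ)) * 2 ^ k :=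
    Finset.sum_congr rfl fun k _ => by rw [neg_one_pow_eq]
  have hexp : ∑ k ∈ range (m + 1), (1 - 2 * (((n - k) / 2 ^ k % 2 : ℕ) : ℤ)) * 2 ^ k
      = (2 ^ (m + 1) - 1) - 2 * ((n : ℤ) - S) := by
    simp only [sub_mul, one_mul]
    rw [Finset.sum_sub_distrib, geom]
    have h3 : ∑ k ∈ range (m + 1), 2 * (((n - k) / 2 ^ k % 2 : ℕ) : ℤ) * 2 ^ k
        = 2 * ∑ k ∈ range (m + 1), (((n - k) / 2 ^ k % 2 : ℕ) : ℤ) * 2 ^ k := by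
      rw [Finset.mul_sum]; exact Finset.sum_congr rfl fun k _ => by ring
    rw [h3, hB, hScast]
    try ring
  rw [hneg, hexp, Nat.cast_sub hle]
  ring



theorem downward_formula (n : ℕ) (hn : 1 ≤ n) :
    (2 * d n : ℤ) =
      2 ^ (Nat.log 2 n + 1) - 1 -
        ∑ k ∈ Finset.range (Nat.log 2 n + 1), (-1 : ℤ) ^ ((n - k) / 2 ^ k) * 2 ^ k := by
  unfold d
  exact downward_formula' n hn
end

section
/- The downward-sloping binary numbers satisfy the recurrence d(0) = 0, d(1) = 1, and, for all i ≥ 1 and all integers j with −1 ≤ j ≤ 2^i − 1: d(2^i + i + j) = d(i − 1) if j = −1, and d(2^i + i + j) = 2^i + d(i + j) if 0 ≤ j ≤ 2^i − 1. -/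
/-- Auxiliary sum with a general upper bound. -/
def F (m N : ℕ) : ℕ :=
  ∑ k ∈ Finset.Icc 1 N, if m % 2 ^ k = k - 1 then 2 ^ k else 0

lemma d_eq (n : ℕ) : d n = n - F n (Nat.log 2 n) := rfl

lemma F_succ (m N : ℕ) :
    F m (N + 1) = F m N + (if m % 2 ^ (N + 1) = N then 2 ^ (N + 1) else 0) := by
  unfold F
  rw [← Finset.insert_Icc_right_eq_Icc_add_one (by omega : 1 ≤ N + 1), Finset.sum_insert (by simp)]
  simp [add_comm]

lemma F_congr {m m' : ℕ} (N : ℕ) (h : m % 2 ^ N = m' % 2 ^ N) : F m N = F m' N := by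
  unfold F
  apply Finset.sum_congr rfl
  intro k hk
  rw [Finset.mem_Icc] at hk
  have hd : (2:ℕ) ^ k ∣ 2 ^ N := pow_dvd_pow 2 hk.2
  have : m % 2 ^ k = m' % 2 ^ k := by
    rw [← Nat.mod_mod_of_dvd m hd, ← Nat.mod_mod_of_dvd m' hd, h]
  rw [this]

lemma F_eq_of_high (m N N' : ℕ) (hNN : N ≤ N')
    (h : ∀ k, N < k → k ≤ N' → m % 2 ^ k ≠ k - 1) : F m N' = F m N := by
  unfold F
  rw [Finset.sum_subset (Finset.Icc_subset_Icc_right hNN)]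
  intro k hk hk'
  rw [Finset.mem_Icc] at hk hk'
  rw [if_neg (h k (by omega) hk.2)]

lemma F_le_self (n : ℕ) : F n n ≤ n := by
  induction n using Nat.strong_induction_on with
  | _ n ih =>
    set T := (Finset.Icc 1 n).filter (fun j => n % 2 ^ j = j - 1) with hT
    rcases T.eq_empty_or_nonempty with he | hne
    · have : F n n = 0 := by
        apply Finset.sum_eq_zero
        intro k hk
        rw [if_neg]
        intro hc
        have : k ∈ T := by rw [hT, Finset.mem_filter]; exact ⟨hk, hc⟩
        rw [he] at this
        simp at this
      omega
    · set k := T.max' hne with hk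
      have hkT : k ∈ T := T.max'_mem hne
      rw [hT, Finset.mem_filter, Finset.mem_Icc] at hkT
      obtain ⟨⟨hk1, hkn⟩, hmod⟩ := hkT
      -- n ≥ 2^k
      have hpow : 2 ^ k ≤ n := by
        by_contra hlt
        push_neg at hlt
        rw [Nat.mod_eq_of_lt hlt] at hmod
        have : 2 ^ k ≤ k := by omega
        have := Nat.lt_two_pow_self (n := k)
        omega
      -- 2^k + (k-1) ≤ n
      have hdvd : 2 ^ k ∣ n - (k - 1) := by
        have : n % 2 ^ k = (k - 1) % 2 ^ k := by
          rw [hmod, Nat.mod_eq_of_lt (by have := Nat.lt_two_pow_self (n := k); omega)]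
        exact (Nat.modEq_iff_dvd' (by have := Nat.lt_two_pow_self (n := k); omega)).mp this.symm
      have hkey : 2 ^ k + (k - 1) ≤ n := by
        have hne0 : n - (k - 1) ≠ 0 := by
          have := Nat.lt_two_pow_self (n := k)
          omega
        have := Nat.le_of_dvd (Nat.pos_of_ne_zero hne0) hdvd
        omega
      -- F n n = F n k
      have h1 : F n n = F n k := by
        apply F_eq_of_high n k n hkn
        intro j hj hj' hc
        have hjT : j ∈ T := by
          rw [hT, Finset.mem_filter, Finset.mem_Icc]
          exact ⟨⟨by omega, hj'⟩, hc⟩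
        have := T.le_max' j hjT
        omega
      -- F n k = F n (k-1) + 2^k
      have h2 : F n k = F n (k - 1) + 2 ^ k := by
        have : k = (k - 1) + 1 := by omega
        rw [this, F_succ, if_pos (by rw [← this]; omega)]
        congr 1
      -- F n (k-1) = F (k-1) (k-1)
      have h3 : F n (k - 1) = F (k - 1) (k - 1) := by
        apply F_congr
        have hd : (2:ℕ) ^ (k - 1) ∣ 2 ^ k := pow_dvd_pow 2 (by omega)
        rw [← Nat.mod_mod_of_dvd n hd, hmod]
      have h4 : F (k - 1) (k - 1) ≤ k - 1 := ih (k - 1) (by omega)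
      omega

lemma S_le (m : ℕ) : F m (Nat.log 2 m) ≤ m := by
  have h1 : F m m = F m (Nat.log 2 m) + ∑ k ∈ Finset.Ioc (Nat.log 2 m) m,
      (if m % 2 ^ k = k - 1 then 2 ^ k else 0) := by
    unfold F
    rw [← Finset.sum_union (by
      simp [Finset.disjoint_left, Finset.mem_Icc, Finset.mem_Ioc]
      omega)]
    congr 1
    ext x
    simp only [Finset.mem_union, Finset.mem_Icc, Finset.mem_Ioc]
    have := Nat.log_le_self 2 m
    omega
  have := F_le_self m
  omega

lemma cond_fail_mid (m L i : ℕ) (hL : L = Nat.log 2 m) (hm : 0 < m) (hmi : i ≤ m) :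
    ∀ k, L < k → k ≤ i → m % 2 ^ k ≠ k - 1 := by
  intro k hk hki hc
  have hlt : m < 2 ^ k := by
    calc m < 2 ^ (Nat.log 2 m + 1) := Nat.lt_pow_succ_log_self (by norm_num) m
    _ ≤ 2 ^ k := Nat.pow_le_pow_right (by norm_num) (by omega)
  rw [Nat.mod_eq_of_lt hlt] at hc
  omega

theorem downward_recurrence :
    d 0 = 0 ∧ d 1 = 1 ∧ ∀ i : ℕ, 1 ≤ i →
      (d (2 ^ i + i - 1) = d (i - 1)) ∧
      (∀ j : ℕ, j ≤ 2 ^ i - 1 → d (2 ^ i + i + j) = 2 ^ i + d (i + j)) := by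
  refine ⟨by simp [d], by simp [d], fun i hi => ⟨?_, ?_⟩⟩
  · -- case j = -1 : d (2^i + i - 1) = d (i - 1)
    have h2i : i < 2 ^ i := Nat.lt_two_pow_self (n := i)
    set n := 2 ^ i + i - 1 with hn
    have hn' : n = 2 ^ i + (i - 1) := by omega
    have hlog : Nat.log 2 n = i := by
      apply Nat.log_eq_of_pow_le_of_lt_pow (by omega)
      have : (2:ℕ) ^ (i + 1) = 2 ^ i + 2 ^ i := by ring
      omega
    have hmod : n % 2 ^ i = (i - 1) % 2 ^ i := by
      rw [hn', Nat.add_mod_left]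
    have hc1 : F n i = F (i - 1) i := F_congr i hmod
    have hmod' : (i - 1) % 2 ^ i = i - 1 := Nat.mod_eq_of_lt (by omega)
    have hc2 : F (i - 1) i = F (i - 1) (i - 1) + 2 ^ i := by
      obtain ⟨p, rfl⟩ : ∃ p, i = p + 1 := ⟨i - 1, by omega⟩
      simp only [Nat.add_sub_cancel] at hmod' ⊢
      rw [F_succ, if_pos hmod']
    have hc3 : F (i - 1) (i - 1) = F (i - 1) (Nat.log 2 (i - 1)) := by
      rcases Nat.eq_or_lt_of_le hi with h1 | h1
      · simp [← h1, F]
      · exact F_eq_of_high _ _ _ (Nat.log_le_self 2 (i - 1))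
          (cond_fail_mid (i - 1) _ (i - 1) rfl (by omega) le_rfl)
    have hS := S_le (i - 1)
    rw [d_eq, d_eq, hlog, hc1, hc2, hc3, hn']
    omega
  · -- case j ≥ 0
    intro j hj
    have h2i : i < 2 ^ i := Nat.lt_two_pow_self (n := i)
    set m := i + j with hm
    have hmub : m ≤ 2 ^ i + i - 1 := by omega
    have hm1 : 1 ≤ m := by omega
    set n := 2 ^ i + i + j with hn
    have hn' : n = 2 ^ i + m := by omega
    set L := Nat.log 2 n with hL
    have hLi : i ≤ L := by
      rw [hL]
      exact (Nat.le_log_iff_pow_le (by norm_num) (by omega)).mpr (by omega)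
    have hLi2 : L < i + 2 := by
      rw [hL]
      apply Nat.log_lt_of_lt_pow (by omega)
      have : (2:ℕ) ^ (i + 2) = 4 * 2 ^ i := by ring
      omega
    -- log 2 m ≤ i
    have hlogm : Nat.log 2 m ≤ i := by
      have : m < 2 ^ (i + 1) := by
        have : (2:ℕ) ^ (i + 1) = 2 ^ i + 2 ^ i := by ring
        omega
      have := Nat.log_lt_of_lt_pow (by omega : m ≠ 0) this
      omega
    -- step 1: F n L = F n i
    have s1 : F n L = F n i := by
      rcases (by omega : L = i ∨ L = i + 1) with h | h
      · rw [h]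
      · rw [h, F_succ, if_neg, add_zero]
        have hge : 2 ^ (i + 1) ≤ n := by
          have := Nat.pow_log_le_self 2 (by omega : n ≠ 0)
          rw [← hL, h] at this
          omega
        have h2 : (2:ℕ) ^ (i + 1) = 2 ^ i + 2 ^ i := by ring
        have : n % 2 ^ (i + 1) = n - 2 ^ (i + 1) := by
          rw [Nat.mod_eq_sub_mod hge, Nat.mod_eq_of_lt (by omega)]
        omega
    -- step 2: F n i = F m i
    have s2 : F n i = F m i := F_congr i (by rw [hn', Nat.add_mod_left])
    -- step 3: F m i = F m (log 2 m)
    have s3 : F m i = F m (Nat.log 2 m) :=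
      F_eq_of_high _ _ _ hlogm (by
        intro k hk hki hc
        exact cond_fail_mid m _ i rfl (by omega) (by omega) k hk hki hc)
    have hS := S_le m
    rw [d_eq, d_eq, ← hL, s1, s2, s3]
    omega
end

section
/- For every natural number n ≥ 0, as an identity of integers, 2·t(n + 1) = 2^{n+1} − 1 + Σ_{k=0}^{n} (−1)^{⌊(n−k)/2^k⌋} · 2^k (note that n − k ≥ 0 for all 0 ≤ k ≤ n). -/
open Finset

/-- For `n ≥ 1`, `t n = -n` plus the sum of `2^k` over all `k ≥ 1` with
`n - k ≡ 0 (mod 2^k)`. All such `k` satisfy `k ≤ n` (the largest term is `k = n`,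
so the sum is at least `2^n > n` and the subtraction does not truncate). -/
def t (n : ℕ) : ℕ :=
  (∑ k ∈ Finset.Icc 1 n, if 2 ^ k ∣ (n - k) then 2 ^ k else 0) - n


lemma perk (m p : ℕ) (hp : 0 < p) :
    (if 2 * p ∣ (m + 1) then 2 * p else 0) + ((m + 1) / p % 2) * p
      = (m / p % 2) * p + (if p ∣ (m + 1) then p else 0) := by
  by_cases hd : p ∣ (m + 1)
  · obtain ⟨a, ha⟩ := hd
    obtain ⟨b, rfl⟩ : ∃ b, a = b + 1 := by
      rcases Nat.eq_zero_or_pos a with rfl | h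
      · simp at ha
      · exact ⟨a - 1, by omega⟩
    have hdiv : (m + 1) / p = b + 1 := by rw [ha, Nat.mul_div_cancel_left _ hp]
    have hm : m = p * b + (p - 1) := by
      have h1 : p * (b + 1) = p * b + p := by ring
      rw [h1] at ha
      omega
    have hmdiv : m / p = b := by
      rw [hm, Nat.mul_add_div hp, Nat.div_eq_of_lt (by omega), add_zero]
    have hiff : (2 * p ∣ m + 1) ↔ (2 ∣ b + 1) := by
      rw [ha, mul_comm 2 p, Nat.mul_dvd_mul_iff_left hp]
    rw [if_pos (show p ∣ m + 1 from ⟨b + 1, ha⟩), hdiv, hmdiv]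
    by_cases hb : 2 ∣ b + 1
    · obtain ⟨c, hc⟩ := hb
      have h1 : (b + 1) % 2 = 0 := by omega
      have h2 : b % 2 = 1 := by omega
      rw [if_pos (show 2 * p ∣ m + 1 from hiff.mpr ⟨c, hc⟩), h1, h2]
      ring
    · have h1 : (b + 1) % 2 = 1 := by
        rcases Nat.even_or_odd (b + 1) with h | h
        · exact absurd h.two_dvd hb
        · exact Nat.odd_iff.mp h
      have h2 : b % 2 = 0 := by omega
      rw [if_neg (show ¬ 2 * p ∣ m + 1 from fun h => hb (hiff.mp h)), h1, h2]
      ring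
  · have h2 : ¬ 2 * p ∣ m + 1 := fun h => hd (dvd_trans (dvd_mul_left p 2) h)
    have hr1 : 1 ≤ (m + 1) % p := by
      rcases Nat.eq_zero_or_pos ((m + 1) % p) with h | h
      · exact absurd (Nat.dvd_of_mod_eq_zero h) hd
      · exact h
    have hr2 : (m + 1) % p < p := Nat.mod_lt _ hp
    have hdm := Nat.div_add_mod (m + 1) p
    have hmdiv : m / p = (m + 1) / p := by
      apply Nat.div_eq_of_lt_le
      · calc (m + 1) / p * p = p * ((m+1)/p) := by ring
          _ ≤ m := by omega
      · calc m < p * ((m+1)/p) + p := by omega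
          _ = ((m+1)/p + 1) * p := by ring
    rw [if_neg h2, if_neg hd, hmdiv]
    ring

lemma transfer (n k : ℕ) (hk : k ≤ n) :
    ((if 2 ^ (k + 1) ∣ (n + 1 - k) then 2 ^ (k + 1) else 0) + ((n + 1 - k) / 2 ^ k % 2) * 2 ^ k)
      + (if 2 ^ (k + 1) ∣ (n - k) then 2 ^ (k + 1) else 0)
    = ((if 2 ^ (k + 1) ∣ (n - k) then 2 ^ (k + 1) else 0) + ((n - k) / 2 ^ k % 2) * 2 ^ k)
      + (if 2 ^ k ∣ (n + 1 - k) then 2 ^ k else 0) := by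
  have hm : n + 1 - k = (n - k) + 1 := by omega
  have h2 : (2 : ℕ) ^ (k + 1) = 2 * 2 ^ k := by ring
  rw [hm, h2]
  have h := perk (n - k) (2 ^ k) (Nat.pow_pos (by norm_num : 0 < 2))
  linarith [h]

lemma Ksum (n : ℕ) :
    ∑ k ∈ range n, ((if 2 ^ (k + 1) ∣ (n - k) then 2 ^ (k + 1) else 0)
      + ((n - k) / 2 ^ k % 2) * 2 ^ k) = n := by
  induction n with
  | zero => simp
  | succ n ih =>
    rcases Nat.eq_zero_or_pos n with rfl | hn
    · norm_num
    · rw [Finset.sum_range_succ]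
      have h1 : n + 1 - n = 1 := by omega
      have hpow : 1 < 2 ^ n := Nat.one_lt_two_pow_iff.mpr (by omega)
      have hlast : (if 2 ^ (n + 1) ∣ (n + 1 - n) then 2 ^ (n + 1) else 0)
          + ((n + 1 - n) / 2 ^ n % 2) * 2 ^ n = 0 := by
        rw [h1, if_neg (fun h => by
          have := Nat.le_of_dvd (by norm_num) h
          have : (2:ℕ) ^ n < 2 ^ (n+1) := by
            exact Nat.pow_lt_pow_right (by norm_num) (by omega)
          omega), Nat.div_eq_of_lt hpow]
        simp
      rw [hlast, add_zero]
      -- sum over range n of transfer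
      have hsum : ∑ k ∈ range n,
          (((if 2 ^ (k + 1) ∣ (n + 1 - k) then 2 ^ (k + 1) else 0)
              + ((n + 1 - k) / 2 ^ k % 2) * 2 ^ k)
            + (if 2 ^ (k + 1) ∣ (n - k) then 2 ^ (k + 1) else 0))
          = ∑ k ∈ range n,
          (((if 2 ^ (k + 1) ∣ (n - k) then 2 ^ (k + 1) else 0)
              + ((n - k) / 2 ^ k % 2) * 2 ^ k)
            + (if 2 ^ k ∣ (n + 1 - k) then 2 ^ k else 0)) :=
        Finset.sum_congr rfl (fun k hk => transfer n k (Nat.le_of_lt (Finset.mem_range.mp hk)))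
      simp only [Finset.sum_add_distrib] at hsum ih ⊢
      -- D = E + 1
      have hE : ∀ k, (if 2 ^ (k + 1) ∣ (n - k) then 2 ^ (k + 1) else 0)
          = (if 2 ^ (k + 1) ∣ (n + 1 - (k + 1)) then 2 ^ (k + 1) else 0) := by
        intro k; rw [Nat.succ_sub_succ]
      have hDE : ∑ k ∈ range (n + 1), (if 2 ^ k ∣ (n + 1 - k) then 2 ^ k else 0)
          = ∑ k ∈ range n, (if 2 ^ (k + 1) ∣ (n - k) then 2 ^ (k + 1) else 0) + 1 := by
        rw [Finset.sum_range_succ']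
        simp only [← hE]
        norm_num
      have hD2 : ∑ k ∈ range (n + 1), (if 2 ^ k ∣ (n + 1 - k) then 2 ^ k else 0)
          = ∑ k ∈ range n, (if 2 ^ k ∣ (n + 1 - k) then 2 ^ k else 0) := by
        rw [Finset.sum_range_succ, h1,
          if_neg (fun h => by have := Nat.le_of_dvd one_pos h; omega), add_zero]
      rw [hD2] at hDE
      linarith [hsum, hDE, ih]

lemma geomN (n : ℕ) : (∑ k ∈ range n, 2 ^ k) + 1 = 2 ^ n := by
  induction n with
  | zero => simp
  | succ n ih => rw [Finset.sum_range_succ, pow_succ]; omega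

lemma negpow (e : ℕ) : (-1 : ℤ) ^ e = 1 - 2 * ((e % 2 : ℕ) : ℤ) := by
  rcases Nat.even_or_odd e with h | h
  · rw [h.neg_one_pow, Nat.even_iff.mp h]; norm_num
  · rw [h.neg_one_pow, Nat.odd_iff.mp h]; norm_num

theorem missing_formula (n : ℕ) :
    (2 * t (n + 1) : ℤ) =
      2 ^ (n + 1) - 1 + ∑ k ∈ Finset.range (n + 1), (-1 : ℤ) ^ ((n - k) / 2 ^ k) * 2 ^ k := by
  set S : ℕ := ∑ k ∈ range (n + 1), ((n - k) / 2 ^ k % 2) * 2 ^ k with hS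
  set T : ℕ := ∑ k ∈ Finset.Icc 1 (n + 1), if 2 ^ k ∣ (n + 1 - k) then 2 ^ k else 0 with hT
  -- Step A : T + S = 2^(n+1) + n
  have hTrw : T = ∑ k ∈ range (n + 1), (if 2 ^ (k + 1) ∣ (n - k) then 2 ^ (k + 1) else 0) := by
    rw [hT, ← Finset.Ico_add_one_right_eq_Icc, Finset.sum_Ico_eq_sum_range,
      show n + 1 + 1 - 1 = n + 1 from by omega]
    apply Finset.sum_congr rfl
    intro i _
    rw [show 1 + i = i + 1 from by omega, show n + 1 - (i + 1) = n - i from by omega]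
  have hA : T + S = 2 ^ (n + 1) + n := by
    rw [hTrw, hS, ← Finset.sum_add_distrib, Finset.sum_range_succ, Ksum n]
    have h0 : n - n = 0 := by omega
    rw [h0, if_pos (dvd_zero _), Nat.zero_div]
    ring
  -- Step B : S + 1 ≤ 2^(n+1)
  have hB : S + 1 ≤ 2 ^ (n + 1) := by
    have : S ≤ ∑ k ∈ range (n + 1), 2 ^ k := by
      apply Finset.sum_le_sum
      intro k _
      have : (n - k) / 2 ^ k % 2 ≤ 1 := by omega
      calc (n - k) / 2 ^ k % 2 * 2 ^ k ≤ 1 * 2 ^ k := Nat.mul_le_mul_right _ this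
        _ = 2 ^ k := one_mul _
    have := geomN (n + 1)
    omega
  -- Step C : t (n+1) = T - (n+1)
  have hTge : n + 1 ≤ T := by omega
  have hC : (t (n + 1) : ℤ) = (T : ℤ) - (n + 1) := by
    rw [t, ← hT, Nat.cast_sub hTge]
    push_cast
    ring
  -- Step D : RHS sum
  have hD : ∑ k ∈ Finset.range (n + 1), (-1 : ℤ) ^ ((n - k) / 2 ^ k) * 2 ^ k
      = (2 ^ (n + 1) - 1) - 2 * (S : ℤ) := by
    have h1 : ∀ k ∈ range (n + 1), (-1 : ℤ) ^ ((n - k) / 2 ^ k) * 2 ^ k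
        = (2 : ℤ) ^ k - 2 * ((((n - k) / 2 ^ k % 2) * 2 ^ k : ℕ) : ℤ) := by
      intro k _
      rw [negpow]
      push_cast
      ring
    have h2 : (∑ k ∈ range (n + 1), (2 : ℤ) ^ k) = 2 ^ (n + 1) - 1 := by
      have hg := geomN (n + 1)
      have hg2 : ((∑ k ∈ range (n + 1), 2 ^ k : ℕ) : ℤ) + 1 = ((2 ^ (n + 1) : ℕ) : ℤ) := by
        exact_mod_cast congrArg (Nat.cast : ℕ → ℤ) hg
      push_cast at hg2
      linarith
    rw [Finset.sum_congr rfl h1, Finset.sum_sub_distrib, ← Finset.mul_sum, ← Nat.cast_sum, h2,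
      ← hS]
  have hAZ : (T : ℤ) + (S : ℤ) = 2 ^ (n + 1) + n := by
    exact_mod_cast congrArg (Nat.cast : ℕ → ℤ) hA
  rw [hD]
  push_cast at hC ⊢
  linarith [hAZ, hC]
end

section
/- The numbers t(n) satisfy the recurrence t(1) = 1, t(2) = 2, and, for all i ≥ 1 and all j with i ≤ j ≤ 2^i + i: t(2^i + j) = 2^{2^i + i} − 2^i + t(i) if j = i, and t(2^i + j) = 2^{2^i + j} − 2^i − 2^j + t(j) if i < j ≤ 2^i + i. -/
open Finset

private def S (n : ℕ) : ℕ :=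
  ∑ k ∈ Finset.Icc 1 n, if 2 ^ k ∣ (n - k) then 2 ^ k else 0

private lemma t_eq (n : ℕ) : t n = S n - n := rfl

private lemma S_as_Ioc (n : ℕ) :
    S n = ∑ k ∈ Finset.Ioc 0 n, if 2 ^ k ∣ (n - k) then 2 ^ k else 0 := by
  rw [S, ← Finset.Icc_add_one_left_eq_Ioc, zero_add]

private lemma tail_single (i m : ℕ) (h1 : i < m) (h2 : m ≤ 2 ^ (i + 1) + i) :
    (∑ k ∈ Finset.Ioc i m, if 2 ^ k ∣ (m - k) then 2 ^ k else 0) = 2 ^ m := by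
  rw [Finset.sum_eq_single_of_mem m (by simp [h1])]
  · simp
  · intro k hk hne
    simp only [Finset.mem_Ioc] at hk
    have hklt : k < m := lt_of_le_of_ne hk.2 hne
    have hpow : 2 ^ (i + 1) ≤ 2 ^ k := Nat.pow_le_pow_right (by norm_num) hk.1
    have hip : i + 1 ≤ 2 ^ (i + 1) := (Nat.lt_two_pow_self (n := i + 1)) |>.le.trans le_rfl
    rw [if_neg]
    intro hdvd
    have hle : 2 ^ k ≤ m - k := Nat.le_of_dvd (by omega) hdvd
    omega

private lemma S_ge (n : ℕ) (hn : 1 ≤ n) : 2 ^ n ≤ S n := by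
  have : (if 2 ^ n ∣ (n - n) then 2 ^ n else 0) ≤ S n := by
    apply Finset.single_le_sum (f := fun k => if 2 ^ k ∣ (n - k) then 2 ^ k else 0)
    · intro k _; positivity
    · simp [hn]
  simpa using this

private lemma head_eq (i j : ℕ) (hij : i ≤ j) :
    (∑ k ∈ Finset.Ioc 0 i, if 2 ^ k ∣ (2 ^ i + j - k) then 2 ^ k else 0) =
    ∑ k ∈ Finset.Ioc 0 i, if 2 ^ k ∣ (j - k) then 2 ^ k else 0 := by
  apply Finset.sum_congr rfl
  intro k hk
  simp only [Finset.mem_Ioc] at hk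
  have hkj : k ≤ j := hk.2.trans hij
  have h1 : 2 ^ i + j - k = 2 ^ i + (j - k) := Nat.add_sub_assoc hkj _
  have h2 : (2 : ℕ) ^ k ∣ 2 ^ i := pow_dvd_pow 2 hk.2
  rw [h1]
  congr 1
  exact propext ⟨fun h => (Nat.dvd_add_right h2).mp h, fun h => Dvd.dvd.add h2 h⟩

private lemma S_split (i j : ℕ) (hi : 1 ≤ i) (hij : i ≤ j) (hub : j ≤ 2 ^ i + i) :
    S (2 ^ i + j) = (∑ k ∈ Finset.Ioc 0 i, if 2 ^ k ∣ (j - k) then 2 ^ k else 0)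
      + 2 ^ (2 ^ i + j) := by
  have hi2 : i + 1 ≤ 2 ^ i := Nat.lt_two_pow_self (n := i)
  have hlt : i < 2 ^ i + j := by omega
  rw [S_as_Ioc, ← Finset.sum_Ioc_consecutive _ (Nat.zero_le i) hlt.le, head_eq i j hij,
    tail_single i (2 ^ i + j) hlt (by rw [pow_succ]; omega)]

theorem missing_recurrence :
    t 1 = 1 ∧ t 2 = 2 ∧ ∀ i : ℕ, 1 ≤ i → ∀ j : ℕ, i ≤ j → j ≤ 2 ^ i + i →
      (j = i → t (2 ^ i + j) = 2 ^ (2 ^ i + i) - 2 ^ i + t i) ∧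
      (i < j → t (2 ^ i + j) = 2 ^ (2 ^ i + j) - 2 ^ i - 2 ^ j + t j) := by
  refine ⟨by decide, by decide, fun i hi j hij hub => ⟨?_, ?_⟩⟩
  · rintro rfl
    have hS := S_split j j hi le_rfl hub
    have hSj : S j = ∑ k ∈ Finset.Ioc 0 j, if 2 ^ k ∣ (j - k) then 2 ^ k else 0 :=
      S_as_Ioc j
    have h1 : 2 ^ j ≤ S j := S_ge j hi
    have h2 : j + 1 ≤ 2 ^ j := Nat.lt_two_pow_self (n := j)
    have h3 : 2 ^ j + j + 1 ≤ 2 ^ (2 ^ j + j) := Nat.lt_two_pow_self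
    rw [t_eq, t_eq, hS, ← hSj]
    omega
  · intro hlt
    have hS := S_split i j hi hij hub
    have hSj : S j = (∑ k ∈ Finset.Ioc 0 i, if 2 ^ k ∣ (j - k) then 2 ^ k else 0)
        + 2 ^ j := by
      rw [S_as_Ioc, ← Finset.sum_Ioc_consecutive _ (Nat.zero_le i) hij]
      congr 1
      have hi2 : i + 1 ≤ 2 ^ i := Nat.lt_two_pow_self (n := i)
      exact tail_single i j hlt (by rw [pow_succ]; omega)
    have h2 : j + 1 ≤ 2 ^ j := Nat.lt_two_pow_self (n := j)
    have h4 : 2 ^ i ≤ 2 ^ j := Nat.pow_le_pow_right (by norm_num) hij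
    have h5 : 2 ^ j + 2 ^ j ≤ 2 ^ (2 ^ i + j) := by
      calc 2 ^ j + 2 ^ j = 2 ^ (j + 1) := by ring
      _ ≤ 2 ^ (2 ^ i + j) := Nat.pow_le_pow_right (by norm_num) (by
          have : 1 ≤ 2 ^ i := Nat.one_le_two_pow; omega)
    rw [t_eq, t_eq, hS, hSj]
    omega
end

section
/- For every natural number n ≥ 1, t(n) = 2^n − 1 − d(n − 1). -/
private lemma helperSum (C : ℕ → Prop) [DecidablePred C] (M : ℕ) :
    (∑ k ∈ Finset.Icc 1 M, if C k then 2 ^ k else 0) = 0 ∨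
    ∃ K, 1 ≤ K ∧ K ≤ M ∧ C K ∧
      (∑ k ∈ Finset.Icc 1 M, if C k then 2 ^ k else 0) =
        ∑ k ∈ Finset.Icc 1 K, if C k then 2 ^ k else 0 := by
  by_cases h : ∃ k ∈ Finset.Icc 1 M, C k
  · right
    have hne : ((Finset.Icc 1 M).filter C).Nonempty := by
      obtain ⟨k, hk, hck⟩ := h
      exact ⟨k, Finset.mem_filter.2 ⟨hk, hck⟩⟩
    set K := ((Finset.Icc 1 M).filter C).max' hne with hKdef
    have hKmem := ((Finset.Icc 1 M).filter C).max'_mem hne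
    have hK1 := (Finset.mem_filter.1 hKmem).1
    have hCK : C K := (Finset.mem_filter.1 hKmem).2
    rw [Finset.mem_Icc] at hK1
    refine ⟨K, hK1.1, hK1.2, hCK, ?_⟩
    symm
    apply Finset.sum_subset
    · intro x hx
      rw [Finset.mem_Icc] at hx ⊢
      omega
    · intro x hx hnx
      rw [Finset.mem_Icc] at hx
      have hxK : K < x := by
        by_contra hc
        exact hnx (Finset.mem_Icc.2 ⟨hx.1, by omega⟩)
      rw [if_neg]
      intro hcx
      have := ((Finset.Icc 1 M).filter C).le_max' x
        (Finset.mem_filter.2 ⟨Finset.mem_Icc.2 hx, hcx⟩)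
      omega
  · left
    apply Finset.sum_eq_zero
    intro k hk
    rw [if_neg]
    intro hck
    exact h ⟨k, hk, hck⟩

private lemma boundSum (n : ℕ) : ∀ K, 1 ≤ K → n % 2 ^ K = K % 2 ^ K →
    (∑ k ∈ Finset.Icc 1 K, if n % 2 ^ k = k % 2 ^ k then 2 ^ k else 0) ≤ 2 ^ K + K - 1 := by
  intro K
  induction K using Nat.strong_induction_on with
  | _ K ih =>
    intro hK1 hCK
    obtain ⟨J, rfl⟩ : ∃ J, K = J + 1 := ⟨K - 1, by omega⟩
    rw [Finset.sum_Icc_succ_top (by omega), if_pos hCK]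
    rcases helperSum (fun k => n % 2 ^ k = k % 2 ^ k) J with h0 | ⟨K', hK'1, hK'J, hCK', heq⟩
    · rw [h0]
      have : (1:ℕ) ≤ 2 ^ (J+1) := Nat.one_le_two_pow
      omega
    · rw [heq]
      have h1 : n ≡ (J + 1) [MOD 2 ^ (J + 1)] := hCK
      have h2 : n ≡ K' [MOD 2 ^ K'] := hCK'
      have h3 : n ≡ (J + 1) [MOD 2 ^ K'] :=
        Nat.ModEq.of_dvd (pow_dvd_pow 2 (by omega)) h1
      have h4 : K' ≡ (J + 1) [MOD 2 ^ K'] := h2.symm.trans h3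
      have hdvd : 2 ^ K' ∣ (J + 1) - K' := (Nat.modEq_iff_dvd' (by omega)).1 h4
      have hle : 2 ^ K' ≤ (J + 1) - K' := Nat.le_of_dvd (by omega) hdvd
      have hih := ih K' (by omega) hK'1 hCK'
      omega

theorem missing_eq_complement (n : ℕ) (hn : 1 ≤ n) : t n = 2 ^ n - 1 - d (n - 1) := by
  unfold t d
  obtain ⟨m, rfl⟩ : ∃ m, n = m + 1 := ⟨n - 1, by omega⟩
  simp only [Nat.add_sub_cancel]
  have hk2pow : ∀ k : ℕ, k < 2 ^ k := fun k => Nat.lt_two_pow_self (n := k)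
  -- rewrite the t-sum condition
  have hcond1 : ∀ k ∈ Finset.Icc 1 (m + 1),
      (if 2 ^ k ∣ (m + 1 - k) then 2 ^ k else 0) =
        (if (m + 1) % 2 ^ k = k % 2 ^ k then 2 ^ k else 0) := by
    intro k hk
    rw [Finset.mem_Icc] at hk
    have hiff : (2 ^ k ∣ (m + 1 - k)) ↔ ((m + 1) % 2 ^ k = k % 2 ^ k) := by
      rw [← Nat.modEq_iff_dvd' (by omega)]
      exact ⟨fun h => h.symm, fun h => h.symm⟩
    exact if_congr hiff rfl rfl
  -- rewrite the d-sum condition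
  have hcond2 : ∀ k ∈ Finset.Icc 1 (Nat.log 2 m),
      (if m % 2 ^ k = k - 1 then 2 ^ k else 0) =
        (if (m + 1) % 2 ^ k = k % 2 ^ k then 2 ^ k else 0) := by
    intro k hk
    rw [Finset.mem_Icc] at hk
    have hiff : (m % 2 ^ k = k - 1) ↔ ((m + 1) % 2 ^ k = k % 2 ^ k) := by
      constructor
      · intro h
        have h1 : m ≡ (k - 1) [MOD 2 ^ k] := by
          unfold Nat.ModEq
          rw [h, Nat.mod_eq_of_lt (by have := hk2pow k; omega)]
        have h2 := h1.add_right 1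
        rwa [show k - 1 + 1 = k by omega] at h2
      · intro h
        have h1 : (m + 1) ≡ (k - 1) + 1 [MOD 2 ^ k] := by
          rwa [show k - 1 + 1 = k by omega]
        have h3 : m ≡ (k - 1) [MOD 2 ^ k] := Nat.ModEq.add_right_cancel' 1 h1
        have h4 : m % 2 ^ k = (k - 1) % 2 ^ k := h3
        rw [h4]
        exact Nat.mod_eq_of_lt (by have := hk2pow k; omega)
    exact if_congr hiff rfl rfl
  rw [Finset.sum_congr rfl hcond1, Finset.sum_congr rfl hcond2]
  -- split off the top term k = m+1
  rw [Finset.sum_Icc_succ_top (by omega : 1 ≤ m + 1), if_pos rfl]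
  -- the sum over Icc 1 m equals the sum over Icc 1 (log 2 m)
  have hlog_le : Nat.log 2 m ≤ m := Nat.log_le_self 2 m
  have hsum_eq : (∑ k ∈ Finset.Icc 1 m, if (m + 1) % 2 ^ k = k % 2 ^ k then 2 ^ k else 0) =
      ∑ k ∈ Finset.Icc 1 (Nat.log 2 m), if (m + 1) % 2 ^ k = k % 2 ^ k then 2 ^ k else 0 := by
    symm
    apply Finset.sum_subset
    · intro x hx
      rw [Finset.mem_Icc] at hx ⊢
      omega
    · intro k hk hnk
      rw [Finset.mem_Icc] at hk
      have hm1 : m ≠ 0 := by omega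
      have hklog : Nat.log 2 m < k := by
        by_contra hc
        exact hnk (Finset.mem_Icc.2 ⟨hk.1, by omega⟩)
      have hmk : m < 2 ^ k := Nat.lt_pow_of_log_lt one_lt_two hklog
      rw [if_neg]
      intro hC
      have h1 : (m + 1) ≡ k [MOD 2 ^ k] := hC
      have hdvd : 2 ^ k ∣ (m + 1) - k := (Nat.modEq_iff_dvd' (by omega)).1 h1.symm
      have := Nat.le_of_dvd (by omega) hdvd
      omega
  rw [hsum_eq]
  -- bound the remaining sum
  set T := ∑ k ∈ Finset.Icc 1 (Nat.log 2 m), if (m + 1) % 2 ^ k = k % 2 ^ k then 2 ^ k else 0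
    with hT
  have hTle : T ≤ m := by
    rcases helperSum (fun k => (m + 1) % 2 ^ k = k % 2 ^ k) (Nat.log 2 m) with
      h0 | ⟨K, hK1, hKL, hCK, heq⟩
    · rw [hT, h0]; omega
    · have hbd := boundSum (m + 1) K hK1 hCK
      have h1 : (m + 1) ≡ K [MOD 2 ^ K] := hCK
      have hdvd : 2 ^ K ∣ (m + 1) - K := (Nat.modEq_iff_dvd' (by omega)).1 h1.symm
      have hle2 : 2 ^ K ≤ (m + 1) - K := Nat.le_of_dvd (by omega) hdvd
      rw [hT, heq]
      omega
  have hlt : m + 1 < 2 ^ (m + 1) := hk2pow (m + 1)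
  omega
end

section
/- For every integer n ≥ 1, t(n) = s(−n), where s is extended to all integers by the same formula. -/
/-- The sloping binary map extended to all integers: `s n = n` plus the sum of `2^k`
over all `k ≥ 1` such that `2^k` divides `n + k`. All such `k` satisfy `k ≤ |n|`,
so the sum is finite. -/
def sZ (n : ℤ) : ℤ :=
  n + ∑ k ∈ Finset.Icc 1 n.natAbs, if (2 : ℤ) ^ k ∣ (n + (k : ℤ)) then (2 : ℤ) ^ k else 0

theorem missing_eq_sloping_neg (n : ℕ) (hn : 1 ≤ n) : (t n : ℤ) = sZ (-(n : ℤ)) := by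
  unfold t sZ
  have habs : (-(n:ℤ)).natAbs = n := by simp
  rw [habs]
  have hsum : ∀ k ∈ Finset.Icc 1 n,
      ((if 2 ^ k ∣ (n - k) then 2 ^ k else 0 : ℕ) : ℤ)
      = (if (2:ℤ)^k ∣ (-(n:ℤ) + k) then (2:ℤ)^k else 0) := by
    intro k hk
    simp only [Finset.mem_Icc] at hk
    have hkn : k ≤ n := hk.2
    have h1 : (-(n:ℤ) + k) = -((n - k : ℕ) : ℤ) := by
      push_cast [hkn]; ring
    rw [h1]; simp only [dvd_neg]
    have h2 : ((2:ℤ)^k ∣ ((n - k : ℕ) : ℤ)) ↔ 2 ^ k ∣ (n - k) := by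
      rw [← Int.natCast_dvd_natCast]; push_cast; rfl
    simp only [h2]
    split <;> simp
  have hge : n ≤ ∑ k ∈ Finset.Icc 1 n, if 2 ^ k ∣ (n - k) then 2 ^ k else 0 := by
    calc n ≤ 2 ^ n := Nat.le_of_lt (Nat.lt_two_pow_self (n := n))
    _ = (if 2 ^ n ∣ (n - n) then 2 ^ n else 0) := by simp
    _ ≤ _ := Finset.single_le_sum (f := fun k => if 2 ^ k ∣ (n - k) then 2 ^ k else 0)
        (fun i _ => by positivity) (by simp [hn])
  rw [Int.ofNat_sub hge, Nat.cast_sum, Finset.sum_congr rfl hsum]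
  ring
end

section
/- The function s : ℤ → ℤ satisfies s(n) ≥ 0 for every integer n, and s is a bijection from the integers ℤ onto the nonnegative integers: s is injective, and every nonnegative integer m equals s(n) for exactly one integer n. -/
namespace Sloping

/-- The truncated sum. -/
def S (n : ℤ) (M : ℕ) : ℤ :=
  ∑ k ∈ Finset.Icc 1 M, if (2 : ℤ) ^ k ∣ (n + (k : ℤ)) then (2 : ℤ) ^ k else 0

lemma two_mul_le_pow (k : ℕ) (hk : 1 ≤ k) : 2 * k ≤ 2 ^ k := by
  induction k with
  | zero => omega
  | succ k ih =>
    rcases Nat.eq_or_lt_of_le hk with h | h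
    · have hk0 : k = 0 := by omega
      subst hk0; norm_num
    · have hk1 : 1 ≤ k := by omega
      have := ih hk1
      have h2 : 2 ^ 1 ≤ 2 ^ k := Nat.pow_le_pow_right (by norm_num) hk1
      have h2' : 2 ≤ 2 ^ k := by simpa using h2
      calc 2 * (k + 1) = 2 * k + 2 := by ring
        _ ≤ 2 ^ k + 2 ^ k := by omega
        _ = 2 ^ (k + 1) := by ring

lemma not_dvd_of_gt_natAbs (n : ℤ) (k : ℕ) (h1 : 1 ≤ k) (h2 : n.natAbs < k) :
    ¬ (2 : ℤ) ^ k ∣ (n + (k : ℤ)) := by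
  intro hdvd
  have h3 : (0 : ℤ) < n + (k : ℤ) := by omega
  have h4 : (2 : ℤ) ^ k ≤ n + (k : ℤ) := Int.le_of_dvd h3 hdvd
  have hp : 2 * k ≤ 2 ^ k := two_mul_le_pow k h1
  have hcast : ((2 ^ k : ℕ) : ℤ) = (2 : ℤ) ^ k := by push_cast; ring
  omega

lemma sZ_eq (n : ℤ) (M : ℕ) (hM : n.natAbs ≤ M) : sZ n = n + S n M := by
  unfold sZ S
  congr 1
  refine Finset.sum_subset (Finset.Icc_subset_Icc_right hM) ?_
  intro k hk hnk
  simp only [Finset.mem_Icc] at hk hnk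
  exact if_neg (not_dvd_of_gt_natAbs n k hk.1 (by omega))

lemma S_succ (n : ℤ) (M : ℕ) :
    S n (M + 1) = S n M +
      (if (2 : ℤ) ^ (M + 1) ∣ (n + ((M + 1 : ℕ) : ℤ)) then (2 : ℤ) ^ (M + 1) else 0) := by
  unfold S
  rw [Finset.sum_Icc_succ_top (by omega : 1 ≤ M + 1)]

lemma S_nonneg (n : ℤ) (M : ℕ) : 0 ≤ S n M := by
  apply Finset.sum_nonneg
  intro k _
  split_ifs with h
  · positivity
  · exact le_refl 0

/-- Chain lemma: if `2^M ∣ n + M` with `L < M`, then `S n L ≤ M - 1`. -/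
lemma chain (L : ℕ) : ∀ (M : ℕ) (n : ℤ), L < M → (2 : ℤ) ^ M ∣ (n + (M : ℤ)) →
    S n L ≤ (M : ℤ) - 1 := by
  induction L with
  | zero =>
    intro M n hLM _
    have : S n 0 = 0 := by simp [S]
    rw [this]
    have : 1 ≤ M := hLM
    push_cast
    omega
  | succ L ih =>
    intro M n hLM h
    rw [S_succ]
    split_ifs with hd
    · have h1 : S n L ≤ ((L : ℤ) + 1) - 1 := by
        have := ih (L + 1) n (Nat.lt_succ_self L) hd
        push_cast at this ⊢
        linarith
      have h2 : (2 : ℤ) ^ (L + 1) ∣ (n + (M : ℤ)) :=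
        dvd_trans (pow_dvd_pow 2 (le_of_lt hLM)) h
      have h3 : (2 : ℤ) ^ (L + 1) ∣ ((M : ℤ) - ((L : ℤ) + 1)) := by
        have := dvd_sub h2 hd
        have heq : (n + (M : ℤ)) - (n + ((L + 1 : ℕ) : ℤ)) = (M : ℤ) - ((L : ℤ) + 1) := by
          push_cast; ring
        rwa [heq] at this
      have h4 : (2 : ℤ) ^ (L + 1) ≤ (M : ℤ) - ((L : ℤ) + 1) := by
        apply Int.le_of_dvd _ h3
        have : (L : ℤ) + 1 < (M : ℤ) := by exact_mod_cast hLM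
        linarith
      linarith
    · have := ih M n (by omega) h
      linarith

/-- If `2^M ∣ n + M` with `1 ≤ M`, then `S n M ≤ 2^M + M - 1`. -/
lemma S_le (M : ℕ) (n : ℤ) (hM : 1 ≤ M) (h : (2 : ℤ) ^ M ∣ (n + (M : ℤ))) :
    S n M ≤ 2 ^ M + (M : ℤ) - 1 := by
  obtain ⟨M', rfl⟩ : ∃ M', M = M' + 1 := ⟨M - 1, by omega⟩
  rw [S_succ, if_pos h]
  have := chain M' (M' + 1) n (Nat.lt_succ_self M') h
  push_cast at this ⊢
  linarith

lemma sZ_nonneg (n : ℤ) : 0 ≤ sZ n := by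
  rcases le_or_gt 0 n with h | h
  · have := S_nonneg n n.natAbs
    have heq := sZ_eq n n.natAbs le_rfl
    omega
  · set a := n.natAbs with ha
    have ha1 : 1 ≤ a := by omega
    have hna : n = -(a : ℤ) := by omega
    have hd : (2 : ℤ) ^ a ∣ (n + (a : ℤ)) := by
      rw [hna]; simp
    have hsingle : (2 : ℤ) ^ a ≤ S n a := by
      have hmem : a ∈ Finset.Icc 1 a := Finset.mem_Icc.mpr ⟨ha1, le_rfl⟩
      have h0 : ∀ k ∈ Finset.Icc 1 a,
          (0 : ℤ) ≤ if (2 : ℤ) ^ k ∣ (n + (k : ℤ)) then (2 : ℤ) ^ k else 0 := by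
        intro k _
        split_ifs with h'
        · positivity
        · exact le_refl 0
      have := Finset.single_le_sum h0 hmem
      rwa [if_pos hd] at this
    have heq := sZ_eq n a le_rfl
    have hpow : (a : ℤ) ≤ 2 ^ a := by
      have : a < 2 ^ a := Nat.lt_two_pow_self (n := a)
      exact_mod_cast this.le
    rw [heq]
    linarith [hna.le, hna.ge]

/-- Upper bound on the truncated sums for `0 ≤ n ≤ 2^K - K - 1`. -/
lemma S_le_of_pos (K : ℕ) (hK : 1 ≤ K) (n : ℤ) (h0 : 0 ≤ n)
    (h1 : n ≤ 2 ^ K - (K : ℤ) - 1) : ∀ M : ℕ, S n M ≤ 2 ^ K - 1 - n := by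
  intro M
  induction M with
  | zero =>
    have : S n 0 = 0 := by simp [S]
    rw [this]
    have : (1 : ℤ) ≤ (K : ℤ) := by exact_mod_cast hK
    linarith
  | succ M ih =>
    by_cases hd : (2 : ℤ) ^ (M + 1) ∣ (n + ((M + 1 : ℕ) : ℤ))
    · have hA := S_le (M + 1) n (by omega) hd
      have hpos : (0 : ℤ) < n + ((M + 1 : ℕ) : ℤ) := by push_cast; linarith
      have hle : (2 : ℤ) ^ (M + 1) ≤ n + ((M + 1 : ℕ) : ℤ) := Int.le_of_dvd hpos hd
      have hmK : M + 1 ≤ K := by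
        by_contra hcon
        have hK1 : K + 1 ≤ M + 1 := by omega
        have hg1 : (2 : ℤ) * 2 ^ K ≤ 2 ^ (M + 1) := by
          calc (2 : ℤ) * 2 ^ K = 2 ^ (K + 1) := by ring
            _ ≤ 2 ^ (M + 1) := pow_le_pow_right₀ one_le_two hK1
        have hg2 : 2 * ((M + 1 : ℕ) : ℤ) ≤ 2 ^ (M + 1) := by
          have := two_mul_le_pow (M + 1) (by omega)
          have hc : ((2 ^ (M + 1) : ℕ) : ℤ) = (2 : ℤ) ^ (M + 1) := by push_cast; ring
          push_cast at this ⊢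
          omega
        push_cast at hle hg2
        linarith
      have hdvd2 : (2 : ℤ) ^ (M + 1) ∣ ((2 : ℤ) ^ K - (n + ((M + 1 : ℕ) : ℤ))) :=
        dvd_sub (pow_dvd_pow 2 hmK) hd
      have hpos2 : (0 : ℤ) < (2 : ℤ) ^ K - (n + ((M + 1 : ℕ) : ℤ)) := by
        have hm' : ((M + 1 : ℕ) : ℤ) ≤ (K : ℤ) := by exact_mod_cast hmK
        push_cast at hm' ⊢
        have hK' : (1 : ℤ) ≤ (K : ℤ) := by exact_mod_cast hK
        linarith
      have hle2 := Int.le_of_dvd hpos2 hdvd2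
      push_cast at hA hle2 ⊢
      linarith
    · rw [S_succ, if_neg hd]
      linarith [ih]

lemma sZ_upper (K : ℕ) (hK : 1 ≤ K) (n : ℤ) (hlo : -(K : ℤ) ≤ n)
    (hhi : n ≤ 2 ^ K - (K : ℤ) - 1) : sZ n ≤ 2 ^ K - 1 := by
  rcases le_or_gt 0 n with h | h
  · have := S_le_of_pos K hK n h hhi n.natAbs
    have heq := sZ_eq n n.natAbs le_rfl
    linarith
  · set a := n.natAbs with ha
    have ha1 : 1 ≤ a := by omega
    have haK : (a : ℤ) ≤ (K : ℤ) := by omega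
    have hna : n = -(a : ℤ) := by omega
    have hd : (2 : ℤ) ^ a ∣ (n + (a : ℤ)) := by rw [hna]; simp
    have hA := S_le a n ha1 hd
    have heq := sZ_eq n a le_rfl
    have hpow : (2 : ℤ) ^ a ≤ 2 ^ K := pow_le_pow_right₀ one_le_two (by exact_mod_cast haK)
    rw [heq]
    linarith [hna.le, hna.ge]

/-- `sZ a = sZ b` implies `a ≡ b` modulo every power of two. -/
lemma mod_eq_of_sZ_eq (a b : ℤ) (hab : sZ a = sZ b) : ∀ K : ℕ, (2 : ℤ) ^ K ∣ (a - b) := by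
  intro K
  induction K with
  | zero => simp
  | succ K ih =>
    set M := max (max a.natAbs b.natAbs) (K + 1) with hM
    have ea := sZ_eq a M (le_trans (le_max_left _ _) (le_max_left _ _))
    have eb := sZ_eq b M (le_trans (le_max_right _ _) (le_max_left _ _))
    have key : (2 : ℤ) ^ (K + 1) ∣ (S a M - S b M) := by
      unfold S
      rw [← Finset.sum_sub_distrib]
      apply Finset.dvd_sum
      intro k hk
      by_cases hkK : k ≤ K
      · have hdvd : (2 : ℤ) ^ k ∣ (a - b) := dvd_trans (pow_dvd_pow 2 hkK) ih
        have hiff : ((2 : ℤ) ^ k ∣ (a + (k : ℤ))) ↔ ((2 : ℤ) ^ k ∣ (b + (k : ℤ))) := by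
          constructor
          · intro h'
            have : b + (k : ℤ) = (a + (k : ℤ)) - (a - b) := by ring
            rw [this]; exact dvd_sub h' hdvd
          · intro h'
            have : a + (k : ℤ) = (b + (k : ℤ)) + (a - b) := by ring
            rw [this]; exact dvd_add h' hdvd
        rw [if_congr hiff rfl rfl, sub_self]
        exact dvd_zero _
      · have h1 : (2 : ℤ) ^ (K + 1) ∣ (if (2 : ℤ) ^ k ∣ (a + (k : ℤ)) then (2 : ℤ) ^ k else 0) := by
          split_ifs
          · exact pow_dvd_pow 2 (by omega)
          · exact dvd_zero _
        have h2 : (2 : ℤ) ^ (K + 1) ∣ (if (2 : ℤ) ^ k ∣ (b + (k : ℤ)) then (2 : ℤ) ^ k else 0) := by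
          split_ifs
          · exact pow_dvd_pow 2 (by omega)
          · exact dvd_zero _
        exact dvd_sub h1 h2
    have hsum : a + S a M = b + S b M := by rw [← ea, ← eb, hab]
    have heq2 : a - b = -(S a M - S b M) := by linarith
    rw [heq2]
    exact dvd_neg.mpr key

lemma sZ_injective : Function.Injective sZ := by
  intro a b hab
  by_contra hne
  have hne' : a - b ≠ 0 := fun h => hne (by linarith [sub_eq_zero.mp h])
  set K := (a - b).natAbs + 1 with hK
  have hdvd := mod_eq_of_sZ_eq a b hab K
  have hle : (2 : ℤ) ^ K ≤ |a - b| :=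
    Int.le_of_dvd (abs_pos.mpr hne') ((dvd_abs _ _).mpr hdvd)
  have habs : |a - b| = ((a - b).natAbs : ℤ) := by
    exact_mod_cast (Int.abs_eq_natAbs (a - b))
  have hlt : ((a - b).natAbs : ℤ) < 2 ^ K := by
    have h1 : (a - b).natAbs < 2 ^ K := by
      calc (a - b).natAbs < 2 ^ (a - b).natAbs := Nat.lt_two_pow_self
        _ ≤ 2 ^ K := Nat.pow_le_pow_right (by omega) (by omega)
    exact_mod_cast h1
  rw [habs] at hle
  linarith

lemma sZ_surj (m : ℤ) (hm : 0 ≤ m) : ∃ n : ℤ, sZ n = m := by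
  set K := m.toNat + 1 with hKdef
  have hK : 1 ≤ K := by omega
  have hmK : m ≤ 2 ^ K - 1 := by
    have h1 : (m.toNat : ℤ) < (2 : ℤ) ^ m.toNat := by exact_mod_cast Nat.lt_two_pow_self (n := m.toNat)
    have h2 : (2 : ℤ) ^ m.toNat ≤ 2 ^ K := pow_le_pow_right₀ one_le_two (by omega)
    have h3 : (m.toNat : ℤ) = m := Int.toNat_of_nonneg hm
    linarith
  set I : Finset ℤ := Finset.Icc (-(K : ℤ)) (2 ^ K - (K : ℤ) - 1) with hI
  have hpowcast : ((2 ^ K : ℕ) : ℤ) = (2 : ℤ) ^ K := by push_cast; ring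
  have hcardI : I.card = 2 ^ K := by
    rw [hI, Int.card_Icc]
    have : (2 : ℤ) ^ K - (K : ℤ) - 1 + 1 - (-(K : ℤ)) = ((2 ^ K : ℕ) : ℤ) := by
      rw [hpowcast]; ring
    rw [this, Int.toNat_natCast]
  have hcardJ : (Finset.Icc (0 : ℤ) (2 ^ K - 1)).card = 2 ^ K := by
    rw [Int.card_Icc]
    have : (2 : ℤ) ^ K - 1 + 1 - 0 = ((2 ^ K : ℕ) : ℤ) := by rw [hpowcast]; ring
    rw [this, Int.toNat_natCast]
  have hsub : I.image sZ ⊆ Finset.Icc (0 : ℤ) (2 ^ K - 1) := by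
    intro x hx
    obtain ⟨n, hn, rfl⟩ := Finset.mem_image.mp hx
    rw [hI, Finset.mem_Icc] at hn
    exact Finset.mem_Icc.mpr ⟨sZ_nonneg n, sZ_upper K hK n hn.1 hn.2⟩
  have hcardimg : (I.image sZ).card = 2 ^ K := by
    rw [Finset.card_image_of_injective _ sZ_injective, hcardI]
  have heq : I.image sZ = Finset.Icc (0 : ℤ) (2 ^ K - 1) :=
    Finset.eq_of_subset_of_card_le hsub (by rw [hcardimg, hcardJ])
  have hmem : m ∈ I.image sZ := by
    rw [heq]
    exact Finset.mem_Icc.mpr ⟨hm, hmK⟩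
  obtain ⟨n, _, hn⟩ := Finset.mem_image.mp hmem
  exact ⟨n, hn⟩

end Sloping

theorem sloping_bijection :
    (∀ n : ℤ, 0 ≤ sZ n) ∧ Function.Injective sZ ∧
      ∀ m : ℤ, 0 ≤ m → ∃! n : ℤ, sZ n = m := by
  refine ⟨Sloping.sZ_nonneg, Sloping.sZ_injective, fun m hm => ?_⟩
  obtain ⟨n, hn⟩ := Sloping.sZ_surj m hm
  exact ⟨n, hn, fun y hy => Sloping.sZ_injective (hy.trans hn.symm)⟩
end

section
/- For every natural number n ≥ 0 and every natural number j satisfying j ≤ n < 2^j, one has d(n) = 2^j − 1 − s(2^j − 1 − n). -/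
theorem downward_from_sloping (n j : ℕ) (h₁ : j ≤ n) (h₂ : n < 2 ^ j) :
    d n = 2 ^ j - 1 - s (2 ^ j - 1 - n) := by
  rcases Nat.eq_zero_or_pos n with rfl | hn
  · have : j = 0 := by omega
    subst this
    simp [d, s]
  have hj : 1 ≤ j := by
    by_contra h
    have : j = 0 := by omega
    subst this
    simp at h₂; omega
  set m := 2 ^ j - 1 - n with hm
  have hn1 : n + 1 ≤ 2 ^ j := h₂
  have key : ∀ k ∈ Finset.Icc 1 j,
      (if 2 ^ k ∣ (m + k) then 2 ^ k else 0) = (if n % 2 ^ k = k - 1 then (2:ℕ) ^ k else 0) := by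
    intro k hk
    simp only [Finset.mem_Icc] at hk
    have hkj : k ≤ j := hk.2
    have hk1 : 1 ≤ k := hk.1
    have hkn : k ≤ n := hkj.trans h₁
    have h2kj : (2:ℕ) ^ k ∣ 2 ^ j := pow_dvd_pow 2 hkj
    have hmk : m + k = 2 ^ j - (n + 1 - k) := by omega
    have hsub : n + 1 - k ≤ 2 ^ j := by omega
    have hiff : 2 ^ k ∣ (m + k) ↔ 2 ^ k ∣ (n + 1 - k) := by
      rw [hmk]
      constructor
      · intro h
        have := Nat.dvd_sub h2kj h
        rwa [Nat.sub_sub_self hsub] at this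
      · intro h
        exact Nat.dvd_sub h2kj h
    have hk2 : k - 1 < 2 ^ k := by
      have := Nat.lt_two_pow_self (n := k)
      omega
    have hiff2 : 2 ^ k ∣ (n + 1 - k) ↔ n % 2 ^ k = k - 1 := by
      have h1 : k - 1 ≤ n := by omega
      rw [show n + 1 - k = n - (k - 1) by omega]
      rw [← Nat.modEq_iff_dvd' h1]
      unfold Nat.ModEq
      rw [Nat.mod_eq_of_lt hk2]
      exact eq_comm
    simp only [hiff.trans hiff2]
  have hlog : Nat.log 2 n < j := Nat.log_lt_of_lt_pow hn.ne' h₂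
  have hd : (∑ k ∈ Finset.Icc 1 (Nat.log 2 n), if n % 2 ^ k = k - 1 then (2:ℕ) ^ k else 0)
      = ∑ k ∈ Finset.Icc 1 j, if n % 2 ^ k = k - 1 then 2 ^ k else 0 := by
    apply Finset.sum_subset
    · exact Finset.Icc_subset_Icc_right (by omega)
    · intro k hk hk'
      simp only [Finset.mem_Icc] at hk hk'
      have hklog : Nat.log 2 n < k := by omega
      have h2k : n < 2 ^ k := Nat.lt_pow_of_log_lt (by norm_num) hklog
      rw [Nat.mod_eq_of_lt h2k]
      have : ¬ (n = k - 1) := by omega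
      simp [this]
  have hs : (∑ k ∈ Finset.Icc 1 m, if 2 ^ k ∣ (m + k) then (2:ℕ) ^ k else 0)
      = ∑ k ∈ Finset.Icc 1 j, if 2 ^ k ∣ (m + k) then 2 ^ k else 0 := by
    rcases le_total m j with hmj | hjm
    · apply Finset.sum_subset
      · exact Finset.Icc_subset_Icc_right hmj
      · intro k hk hk'
        simp only [Finset.mem_Icc] at hk hk'
        have hmkk : m < k := by omega
        have : ¬ 2 ^ k ∣ (m + k) := by
          intro h
          have hpos : 0 < m + k := by omega
          have hle := Nat.le_of_dvd hpos h
          have h2 : k < 2 ^ k := Nat.lt_two_pow_self (n := k)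
          have h3 : m + k < 2 * k := by omega
          have h4 : 2 * k ≤ 2 ^ k := by
            calc 2 * k ≤ 2 * 2 ^ (k - 1) := by
                  have := Nat.lt_two_pow_self (n := k - 1); omega
            _ = 2 ^ k := by
                  rw [← pow_succ']
                  congr 1
                  omega
          omega
        simp [this]
    · symm
      apply Finset.sum_subset
      · exact Finset.Icc_subset_Icc_right hjm
      · intro k hk hk'
        simp only [Finset.mem_Icc] at hk hk'
        have hjk : j < k := by omega
        have : ¬ 2 ^ k ∣ (m + k) := by
          intro h
          have hpos : 0 < m + k := by omega
          have hle := Nat.le_of_dvd hpos h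
          have h2 : 2 ^ (j + 1) ≤ 2 ^ k := Nat.pow_le_pow_right (by norm_num) hjk
          have h2j : 2 ^ (j + 1) = 2 * 2 ^ j := by rw [pow_succ]; ring
          omega
        simp [this]
  unfold d s
  rw [hd, hs, Finset.sum_congr rfl key]
  omega
end

section
/- For every natural number n and every natural number j satisfying 0 ≤ n < 2^j − j, one has s(n) = 2^j − 1 − d(2^j − 1 − n). -/
lemma two_mul_le_pow : ∀ k : ℕ, 1 ≤ k → 2 * k ≤ 2 ^ k := by
  intro k
  induction k with
  | zero => omega
  | succ k ih =>
    intro _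
    rcases Nat.eq_or_lt_of_le (Nat.zero_le k) with hk | hk
    · simp [← hk]
    · have := ih hk
      have h1 : 1 ≤ 2 ^ k := Nat.one_le_two_pow
      rw [pow_succ]
      omega

lemma pow_gap (j k : ℕ) (h : j ≤ k) : 2 ^ j + (k - j) ≤ 2 ^ k := by
  obtain ⟨d, rfl⟩ := Nat.exists_eq_add_of_le h
  have h1 : d + 1 ≤ 2 ^ d := (Nat.lt_two_pow_self (n := d))
  have h2 : 1 ≤ 2 ^ j := Nat.one_le_two_pow
  calc 2 ^ j + (j + d - j) = 2 ^ j + d := by omega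
    _ ≤ 2 ^ j * (d + 1) := by nlinarith
    _ ≤ 2 ^ j * 2 ^ d := Nat.mul_le_mul_left _ h1
    _ = 2 ^ (j + d) := (pow_add 2 j d).symm

lemma mod_pow_eq (m k : ℕ) (hm : k - 1 ≤ m) : m % 2 ^ k = k - 1 ↔ 2 ^ k ∣ (m - (k - 1)) := by
  have hk2 : k < 2 ^ k := (Nat.lt_two_pow_self (n := k))
  constructor
  · intro hmod
    have hd := Nat.div_add_mod m (2 ^ k)
    exact ⟨m / 2 ^ k, by omega⟩
  · rintro ⟨q, hq⟩
    have hmq : m = 2 ^ k * q + (k - 1) := by omega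
    rw [hmq, Nat.mul_add_mod]
    exact Nat.mod_eq_of_lt (by omega)

lemma sum_pow_le : ∀ K : Finset ℕ, (∀ a ∈ K, 1 ≤ a) →
    (∀ a ∈ K, ∀ b ∈ K, a < b → a + 2 ^ a ≤ b) →
    ∀ b, (∀ a ∈ K, a ≤ b) → ∑ k ∈ K, 2 ^ k ≤ 2 ^ b + b - 1 := by
  intro K
  induction K using Finset.strongInductionOn with
  | _ K ih =>
    intro h1 hgap b hb
    rcases K.eq_empty_or_nonempty with hKe | hne
    · rw [hKe]; simp
    · set c := K.max' hne with hc
      have hcK : c ∈ K := K.max'_mem hne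
      have hsub : K.erase c ⊂ K := Finset.erase_ssubset hcK
      have hrec := ih (K.erase c) hsub (fun a ha => h1 a (Finset.mem_of_mem_erase ha))
        (fun a ha b' hb' hab => hgap a (Finset.mem_of_mem_erase ha) b' (Finset.mem_of_mem_erase hb') hab)
      have hsum : ∑ k ∈ K, 2 ^ k = 2 ^ c + ∑ k ∈ K.erase c, 2 ^ k :=
        (Finset.add_sum_erase K _ hcK).symm
      have herase : ∑ k ∈ K.erase c, 2 ^ k ≤ c - 1 := by
        rcases (K.erase c).eq_empty_or_nonempty with he | hne2
        · simp [he]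
        · set c2 := (K.erase c).max' hne2 with hc2d
          have hc2 : c2 ∈ K.erase c := Finset.max'_mem _ hne2
          have hc2K : c2 ∈ K := Finset.mem_of_mem_erase hc2
          have hc2lt : c2 < c :=
            lt_of_le_of_ne (Finset.le_max' K c2 hc2K) (Finset.ne_of_mem_erase hc2)
          have hgap2 := hgap c2 hc2K c hcK hc2lt
          have hb2 := hrec c2 (fun a ha => Finset.le_max' _ a ha)
          omega
      have hcb : c ≤ b := hb c hcK
      have hpow : 2 ^ c ≤ 2 ^ b := Nat.pow_le_pow_right (by norm_num) hcb
      have h1c := h1 c hcK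
      omega


theorem sloping_from_downward (n j : ℕ) (h : n < 2 ^ j - j) :
    s n = 2 ^ j - 1 - d (2 ^ j - 1 - n) := by
  have hj : j < 2 ^ j := (Nat.lt_two_pow_self (n := j))
  set m := 2 ^ j - 1 - n with hmdef
  have hmj : j ≤ m := by omega
  have hmn : m + n + 1 = 2 ^ j := by omega
  set L := Nat.log 2 m with hLdef
  -- key equivalence for 1 ≤ k ≤ j
  have key : ∀ k, 1 ≤ k → k ≤ j → (m % 2 ^ k = k - 1 ↔ 2 ^ k ∣ (n + k)) := by
    intro k hk1 hkj
    rw [mod_pow_eq m k (by omega)]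
    have h2 : (2:ℕ) ^ k ∣ 2 ^ j := pow_dvd_pow 2 hkj
    have ha : (m - (k - 1)) + (n + k) = 2 ^ j := by omega
    have hle : m - (k - 1) ≤ m := Nat.sub_le _ _
    constructor
    · intro hd
      have h3 : (2:ℕ) ^ k ∣ (2 ^ j - (m - (k - 1))) := Nat.dvd_sub h2 hd
      have h4 : 2 ^ j - (m - (k - 1)) = n + k := by omega
      rwa [h4] at h3
    · intro hd
      have h3 : (2:ℕ) ^ k ∣ (2 ^ j - (n + k)) := Nat.dvd_sub h2 hd
      have h4 : 2 ^ j - (n + k) = m - (k - 1) := by omega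
      rwa [h4] at h3
  -- vanishing of s-terms
  have hfn : ∀ k, n < k → (if 2 ^ k ∣ (n + k) then 2 ^ k else 0) = 0 := by
    intro k hk
    rw [if_neg]
    intro hd
    have hle := Nat.le_of_dvd (by omega) hd
    have h2k := two_mul_le_pow k (by omega)
    omega
  have hfj : ∀ k, j < k → (if 2 ^ k ∣ (n + k) then 2 ^ k else 0) = 0 := by
    intro k hk
    rw [if_neg]
    intro hd
    have hle := Nat.le_of_dvd (by omega) hd
    have hg := pow_gap j k (le_of_lt hk)
    omega
  -- re-index the s-sum over Icc 1 j
  have hS : (∑ k ∈ Finset.Icc 1 n, if 2 ^ k ∣ (n + k) then 2 ^ k else 0)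
      = ∑ k ∈ Finset.Icc 1 j, if 2 ^ k ∣ (n + k) then 2 ^ k else 0 := by
    have e1 : (∑ k ∈ Finset.Icc 1 n, if 2 ^ k ∣ (n + k) then 2 ^ k else 0)
        = ∑ k ∈ Finset.Icc 1 (max n j), if 2 ^ k ∣ (n + k) then 2 ^ k else 0 :=
      Finset.sum_subset (Finset.Icc_subset_Icc_right (le_max_left n j))
        (fun k hk hk2 => hfn k (by simp [Finset.mem_Icc] at hk hk2; omega))
    have e2 : (∑ k ∈ Finset.Icc 1 j, if 2 ^ k ∣ (n + k) then 2 ^ k else 0)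
        = ∑ k ∈ Finset.Icc 1 (max n j), if 2 ^ k ∣ (n + k) then 2 ^ k else 0 :=
      Finset.sum_subset (Finset.Icc_subset_Icc_right (le_max_right n j))
        (fun k hk hk2 => hfj k (by simp [Finset.mem_Icc] at hk hk2; omega))
    rw [e1, e2]
  -- re-index the d-sum over Icc 1 j
  have hmne : ∀ k, 1 ≤ k → k ≤ L → 2 ^ k ≤ m := by
    intro k hk1 hkL
    have hm0 : m ≠ 0 := by
      intro h0
      rw [h0] at hLdef
      simp [Nat.log_zero_right] at hLdef
      omega
    exact (Nat.le_log_iff_pow_le (by norm_num) hm0).mp hkL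
  have hgLj : ∀ k, L < k → k ≤ max L j → (if m % 2 ^ k = k - 1 then 2 ^ k else 0) = 0 := by
    intro k hkL hkmax
    rw [if_neg]
    intro hmod
    have hkj : k ≤ j := by omega
    have hm0 : m ≠ 0 := by omega
    have hlt : m < 2 ^ k := by
      exact (Nat.log_lt_iff_lt_pow (by norm_num) hm0).mp (by omega)
    rw [Nat.mod_eq_of_lt hlt] at hmod
    omega
  have hgjL : ∀ k, 1 ≤ k → j < k → k ≤ L → (if m % 2 ^ k = k - 1 then 2 ^ k else 0) = 0 := by
    intro k hk1 hkj hkL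
    have h1 := hmne k hk1 hkL
    have h2 : (2:ℕ) ^ j ≤ 2 ^ k := Nat.pow_le_pow_right (by norm_num) (le_of_lt hkj)
    omega
  have hT : (∑ k ∈ Finset.Icc 1 L, if m % 2 ^ k = k - 1 then 2 ^ k else 0)
      = ∑ k ∈ Finset.Icc 1 j, if m % 2 ^ k = k - 1 then 2 ^ k else 0 := by
    have e1 : (∑ k ∈ Finset.Icc 1 L, if m % 2 ^ k = k - 1 then 2 ^ k else 0)
        = ∑ k ∈ Finset.Icc 1 (max L j), if m % 2 ^ k = k - 1 then 2 ^ k else 0 :=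
      Finset.sum_subset (Finset.Icc_subset_Icc_right (le_max_left L j))
        (fun k hk hk2 => hgLj k (by simp [Finset.mem_Icc] at hk hk2; omega)
          (by simp [Finset.mem_Icc] at hk; omega))
    have e2 : (∑ k ∈ Finset.Icc 1 j, if m % 2 ^ k = k - 1 then 2 ^ k else 0)
        = ∑ k ∈ Finset.Icc 1 (max L j), if m % 2 ^ k = k - 1 then 2 ^ k else 0 :=
      Finset.sum_subset (Finset.Icc_subset_Icc_right (le_max_right L j))
        (fun k hk hk2 => hgjL k (by simp [Finset.mem_Icc] at hk; omega)
          (by simp [Finset.mem_Icc] at hk hk2; omega) (by simp [Finset.mem_Icc] at hk hk2; omega))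
    rw [e1, e2]
  -- the two sums over Icc 1 j agree
  have hST : (∑ k ∈ Finset.Icc 1 j, if 2 ^ k ∣ (n + k) then 2 ^ k else 0)
      = ∑ k ∈ Finset.Icc 1 j, if m % 2 ^ k = k - 1 then 2 ^ k else 0 := by
    refine Finset.sum_congr rfl (fun k hk => ?_)
    simp only [Finset.mem_Icc] at hk
    rw [if_congr (iff_of_eq (propext ((key k hk.1 hk.2)))).symm rfl rfl]
  -- bound: the d-sum is at most m
  have hTm : (∑ k ∈ Finset.Icc 1 L, if m % 2 ^ k = k - 1 then 2 ^ k else 0) ≤ m := by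
    rw [← Finset.sum_filter]
    set K := (Finset.Icc 1 L).filter (fun k => m % 2 ^ k = k - 1) with hK
    have hKmem : ∀ a ∈ K, 1 ≤ a ∧ a ≤ L ∧ m % 2 ^ a = a - 1 := by
      intro a ha
      rw [hK, Finset.mem_filter, Finset.mem_Icc] at ha
      exact ⟨ha.1.1, ha.1.2, ha.2⟩
    rcases K.eq_empty_or_nonempty with hKe | hne
    · rw [hKe]; simp
    · have hgap : ∀ a ∈ K, ∀ b ∈ K, a < b → a + 2 ^ a ≤ b := by
        intro a ha b hb hab
        obtain ⟨ha1, haL, hamod⟩ := hKmem a ha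
        obtain ⟨hb1, hbL, hbmod⟩ := hKmem b hb
        have hdvd : (2:ℕ) ^ a ∣ 2 ^ b := pow_dvd_pow 2 (le_of_lt hab)
        have h1 : m % 2 ^ a = (m % 2 ^ b) % 2 ^ a := (Nat.mod_mod_of_dvd m hdvd).symm
        rw [hbmod, hamod] at h1
        -- h1 : a - 1 = (b - 1) % 2 ^ a
        have hd2 := Nat.div_add_mod (b - 1) (2 ^ a)
        set q := (b - 1) / 2 ^ a with hq
        have hq0 : q ≠ 0 := by
          intro h0
          rw [h0] at hd2
          omega
        have : 2 ^ a ≤ 2 ^ a * q := Nat.le_mul_of_pos_right _ (Nat.pos_of_ne_zero hq0)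
        omega
      set c := K.max' hne with hcdef
      have hcK : c ∈ K := K.max'_mem hne
      obtain ⟨hc1, hcL, hcmod⟩ := hKmem c hcK
      have hbound := sum_pow_le K (fun a ha => (hKmem a ha).1) hgap c
        (fun a ha => Finset.le_max' K a ha)
      -- m ≥ 2 ^ c + c - 1
      have h2cm : 2 ^ c ≤ m := hmne c hc1 hcL
      have hd2 := Nat.div_add_mod m (2 ^ c)
      have hc2 : c < 2 ^ c := (Nat.lt_two_pow_self (n := c))
      have hq0 : m / 2 ^ c ≠ 0 := by
        intro h0
        rw [h0] at hd2
        omega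
      have : 2 ^ c ≤ 2 ^ c * (m / 2 ^ c) := Nat.le_mul_of_pos_right _ (Nat.pos_of_ne_zero hq0)
      omega
  -- assemble
  simp only [s, d, ← hLdef]
  rw [hS, hST, ← hT]
  omega
end

section
/- For every natural number n ≥ 1, t(n) = s(2^n − n) − 2^n. -/
lemma two_mul_le_pow' (n : ℕ) (h : 1 ≤ n) : 2 * n ≤ 2 ^ n := by
  induction n with
  | zero => omega
  | succ m ih =>
    rcases Nat.eq_zero_or_pos m with hm | hm
    · subst hm; norm_num
    · have h1 := ih hm
      have h2 : 2 ≤ 2 ^ m := Nat.one_lt_two_pow_iff.mpr (by omega)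
      have : 2 ^ (m + 1) = 2 ^ m + 2 ^ m := by ring
      omega

theorem missing_from_sloping (n : ℕ) (hn : 1 ≤ n) : t n = s (2 ^ n - n) - 2 ^ n := by
  have hpow : 2 * n ≤ 2 ^ n := two_mul_le_pow' n hn
  have hle : n ≤ 2 ^ n - n := by omega
  have hkey : ∑ k ∈ Finset.Icc 1 (2 ^ n - n), (if 2 ^ k ∣ (2 ^ n - n + k) then 2 ^ k else 0)
      = ∑ k ∈ Finset.Icc 1 n, (if 2 ^ k ∣ (n - k) then 2 ^ k else 0) := by
    rw [← Finset.sum_subset (Finset.Icc_subset_Icc_right hle)]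
    · apply Finset.sum_congr rfl
      intro k hk
      simp only [Finset.mem_Icc] at hk
      have hdvd : (2:ℕ) ^ k ∣ 2 ^ n := pow_dvd_pow 2 hk.2
      refine if_congr ?_ rfl rfl
      constructor
      · intro h
        have h2 := Nat.dvd_sub hdvd h
        rwa [show 2 ^ n - (2 ^ n - n + k) = n - k by omega] at h2
      · intro h
        have h2 := Nat.dvd_sub hdvd h
        rwa [show 2 ^ n - (n - k) = 2 ^ n - n + k by omega] at h2
    · intro k hk hk'
      simp only [Finset.mem_Icc] at hk hk'
      have hnk : n < k := by omega
      have hbig : 2 ^ (n + 1) ≤ 2 ^ k := Nat.pow_le_pow_right (by norm_num) (by omega)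
      have h2 : 2 ^ (n + 1) = 2 ^ n + 2 ^ n := by ring
      rw [if_neg]
      intro h
      have := Nat.le_of_dvd (by omega) h
      omega
  simp only [s, t, hkey]
  omega
end

section
/- For any integers a ≥ 1 and b ≥ 0, the values s(n) − n for n ranging over the arithmetic progression {a·j + b : j ≥ 0} are unbounded: for every M there exists j ≥ 0 such that s(a·j + b) − (a·j + b) > M. -/
theorem sloping_unbounded_on_AP (a b : ℕ) (ha : 1 ≤ a) :
    ∀ M : ℕ, ∃ j : ℕ, M < s (a * j + b) - (a * j + b) := by
  intro M
  obtain ⟨v, a', hnd, rfl⟩ :=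
    Nat.exists_eq_pow_mul_and_not_dvd (n := a) (by omega) 2 (by norm_num)
  have ha' : Odd a' := Nat.odd_iff.mpr (by omega)
  have ha'1 : 1 ≤ a' := by have := Nat.odd_iff.mp ha'; omega
  have hv : 1 ≤ 2 ^ v := Nat.one_le_two_pow
  set T := M + b + v + 1 with hT
  have hTb : b ≤ 2 ^ v * T := by nlinarith
  set k := 2 ^ v * T - b with hk
  have hkb : k + b = 2 ^ v * T := by omega
  have hkge : M + v + 1 ≤ k := by nlinarith
  have hkv : v < k := by omega
  have hMk : M < 2 ^ k := lt_of_le_of_lt (by omega) (Nat.lt_two_pow_self (n := k))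
  set m := 2 ^ (k - v) with hm
  haveI : NeZero m := ⟨by positivity⟩
  have hm1 : 1 ≤ m := Nat.one_le_two_pow
  have hc : Nat.Coprime a' m := (ha'.coprime_two_right).pow_right _
  set j0 := ((a' : ZMod m)⁻¹ * (-(T : ZMod m))).val with hj0
  refine ⟨j0 + m * k, ?_⟩
  set j := j0 + m * k with hj
  set n := 2 ^ v * a' * j + b with hn
  have hdiv : m ∣ a' * j + T := by
    rw [← ZMod.natCast_eq_zero_iff]
    push_cast [hj, hj0]
    rw [ZMod.natCast_zmod_val]
    have : (m : ZMod m) = 0 := ZMod.natCast_self m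
    rw [this]
    ring_nf
    rw [ZMod.coe_mul_inv_eq_one _ hc]
    ring
  have hdvd : 2 ^ k ∣ n + k := by
    have h1 : n + k = 2 ^ v * (a' * j + T) := by
      have h2 : n + k = 2 ^ v * a' * j + (k + b) := by rw [hn]; ring
      rw [h2, hkb]; ring
    rw [h1, show (2:ℕ) ^ k = 2 ^ v * 2 ^ (k - v) by
      rw [← pow_add]; congr 1; omega]
    exact mul_dvd_mul_left _ hdiv
  have hkn : k ≤ n := by
    have hjk : k ≤ j := le_trans (Nat.le_mul_of_pos_left k (by omega)) (Nat.le_add_left _ _)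
    calc k ≤ j := hjk
    _ ≤ 2 ^ v * a' * j := Nat.le_mul_of_pos_left j (by positivity)
    _ ≤ n := Nat.le_add_right _ _
  have hsum : 2 ^ k ≤ ∑ i ∈ Finset.Icc 1 n, if 2 ^ i ∣ (n + i) then 2 ^ i else 0 := by
    have hmem : k ∈ Finset.Icc 1 n := Finset.mem_Icc.mpr ⟨by omega, hkn⟩
    have := Finset.single_le_sum (f := fun i => if 2 ^ i ∣ (n + i) then 2 ^ i else 0)
      (fun i _ => by positivity) hmem
    simpa [hdvd] using this
  have : s n - n = ∑ i ∈ Finset.Icc 1 n, if 2 ^ i ∣ (n + i) then 2 ^ i else 0 := by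
    simp [s]
  omega
end

section
/- For a natural number n, s(n) = n if and only if n ≡ 0 (mod 4) and n does not belong to any of the arithmetic progressions Q_r = {2^{4r}·j − 4r : j ≥ 1} for r = 1, 2, 3, …. -/
/-! `s n = n` says that no `k ≥ 1` has `2 ^ k ∣ n + k`. For `k = 1, 2` this forces `4 ∣ n`;
once `4 ∣ n`, any such `k` is itself a multiple of `4`, say `4 r`, and then `2 ^ k ∣ n + k`
says exactly that `n ∈ Q_r`. -/

lemma le_of_two_pow_dvd_add {n k : ℕ} (hk : 0 < k) (h : 2 ^ k ∣ n + k) : k ≤ n := by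
  obtain ⟨m, rfl⟩ := Nat.exists_eq_add_of_lt hk
  have hle : 2 ^ (m + 1) ≤ n + (m + 1) := Nat.le_of_dvd (by omega) (by simpa using h)
  have hm : m < 2 ^ m := Nat.lt_two_pow_self
  rw [pow_succ] at hle
  omega

lemma s_eq_self_iff (n : ℕ) : s n = n ↔ ∀ k, 0 < k → ¬ 2 ^ k ∣ n + k := by
  simp only [s, Nat.add_eq_left, Finset.sum_eq_zero_iff, Finset.mem_Icc, ite_eq_right_iff,
    pow_ne_zero _ two_ne_zero, imp_false]
  exact ⟨fun h k hk hdvd => h k ⟨hk, le_of_two_pow_dvd_add hk hdvd⟩ hdvd,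
    fun h k hk => h k hk.1⟩

lemma four_dvd_of_two_pow_dvd_add {n k : ℕ} (hn : 4 ∣ n) (hk : 0 < k) (h : 2 ^ k ∣ n + k) :
    4 ∣ k := by
  have hk2 : 2 ≤ k := by
    by_contra! hk1
    obtain rfl : k = 1 := by omega
    omega
  have h4 : 4 ∣ n + k := (pow_dvd_pow 2 hk2).trans h
  omega

theorem sloping_fixed_points (n : ℕ) :
    s n = n ↔
      n % 4 = 0 ∧ ∀ r : ℕ, 1 ≤ r → ¬ ∃ j : ℕ, 1 ≤ j ∧ n + 4 * r = 2 ^ (4 * r) * j := by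
  rw [s_eq_self_iff]
  constructor
  · intro H
    refine ⟨?_, fun r hr ⟨j, _, hj⟩ => H (4 * r) (by omega) ⟨j, hj⟩⟩
    have h1 := H 1 one_pos
    have h2 := H 2 two_pos
    norm_num at h1 h2
    omega
  · rintro ⟨h4, hQ⟩ k hk ⟨j, hj⟩
    obtain ⟨r, rfl⟩ := four_dvd_of_two_pow_dvd_add (Nat.dvd_of_mod_eq_zero h4) hk ⟨j, hj⟩
    refine hQ r (by omega) ⟨j, Nat.pos_of_ne_zero ?_, hj⟩
    rintro rfl
    omega
end

section
/- The function f satisfies the recurrence f(1) = 1 and, for all i ≥ 0 and all j with 1 ≤ j ≤ 2^i: f(2^i + j) = f(j) + 1 if 1 ≤ j ≤ i, and f(2^i + j) = f(j) if i + 1 ≤ j ≤ 2^i. -/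
/-- `f n` is the number of integers `k` with `1 ≤ k ≤ n` such that `k ≡ n (mod 2^k)`. -/
def f (n : ℕ) : ℕ := ((Finset.Icc 1 n).filter (fun k => n % 2 ^ k = k % 2 ^ k)).card

/-!
Write `n = 2 ^ i + j`. For `k ≤ i` adding `2 ^ i` does not change the residue mod `2 ^ k`, so `n`
and `j` are counted by the same `k ≤ i`. Among `k > i`, where `n ≤ 2 ^ k`, the only one counted
for `n` is `k = n`; for `j` it is `k = j` if `j > i`, and none otherwise.
-/

open Finset

lemma mod_two_pow_eq_mod_two_pow_self_iff {n k : ℕ} (hk : 1 ≤ k) (hn : n ≤ 2 ^ k) :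
    n % 2 ^ k = k % 2 ^ k ↔ n = k := by
  have hk2 : k < 2 ^ k := Nat.lt_two_pow_self
  rw [Nat.mod_eq_of_lt hk2]
  rcases hn.lt_or_eq with hn | rfl
  · rw [Nat.mod_eq_of_lt hn]
  · rw [Nat.mod_self]
    omega

lemma two_pow_add_mod_two_pow {i k : ℕ} (j : ℕ) (hk : k ≤ i) :
    (2 ^ i + j) % 2 ^ k = j % 2 ^ k := by
  obtain ⟨c, hc⟩ := pow_dvd_pow 2 hk
  rw [hc, Nat.mul_add_mod]

/-- No `k > n` is counted, since then `n < k < 2 ^ k`. -/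
lemma f_eq_card_filter_Icc_of_le {n m : ℕ} (h : n ≤ m) :
    f n = #{k ∈ Icc 1 m | n % 2 ^ k = k % 2 ^ k} := by
  unfold f
  congr 1
  ext k
  simp only [mem_filter, mem_Icc]
  refine ⟨fun ⟨⟨hk1, hkn⟩, hc⟩ => ⟨⟨hk1, hkn.trans h⟩, hc⟩,
    fun ⟨⟨hk1, _⟩, hc⟩ => ⟨⟨hk1, ?_⟩, hc⟩⟩
  by_contra! hnk
  have hn : n ≤ 2 ^ k := hnk.le.trans Nat.lt_two_pow_self.le
  exact hnk.ne ((mod_two_pow_eq_mod_two_pow_self_iff hk1 hn).mp hc)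

lemma f_eq_card_filter_Icc_add_one {i n : ℕ} (hi : i < n) (hn : n ≤ 2 ^ (i + 1)) :
    f n = #{k ∈ Icc 1 i | n % 2 ^ k = k % 2 ^ k} + 1 := by
  have high : {k ∈ Ioc i n | n % 2 ^ k = k % 2 ^ k} = {n} := by
    ext k
    simp only [mem_filter, mem_Ioc, mem_singleton]
    constructor
    · rintro ⟨⟨hik, _⟩, hc⟩
      exact ((mod_two_pow_eq_mod_two_pow_self_iff (by omega)
        (hn.trans (Nat.pow_le_pow_right two_pos hik))).mp hc).symm
    · rintro rfl
      exact ⟨⟨hi, le_rfl⟩, rfl⟩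
  have split : Icc 1 i ∪ Ioc i n = Icc 1 n := by
    ext k
    simp only [mem_union, mem_Icc, mem_Ioc]
    omega
  have disj : Disjoint {k ∈ Icc 1 i | n % 2 ^ k = k % 2 ^ k} {n} :=
    disjoint_singleton_right.mpr (by simp only [mem_filter, mem_Icc]; omega)
  rw [f, ← split, filter_union, high, card_union_of_disjoint disj, card_singleton]

theorem f_recurrence :
    f 1 = 1 ∧ ∀ i j : ℕ, 1 ≤ j → j ≤ 2 ^ i →
      (j ≤ i → f (2 ^ i + j) = f j + 1) ∧
      (i + 1 ≤ j → f (2 ^ i + j) = f j) := by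
  refine ⟨by decide, fun i j hj1 hj2 => ?_⟩
  have hi : i < 2 ^ i + j := Nat.lt_two_pow_self.trans_le (Nat.le_add_right _ _)
  have key : f (2 ^ i + j) = #{k ∈ Icc 1 i | j % 2 ^ k = k % 2 ^ k} + 1 := by
    rw [f_eq_card_filter_Icc_add_one hi (by rw [pow_succ]; omega)]
    congr 2
    exact filter_congr fun k hk => by rw [two_pow_add_mod_two_pow j (mem_Icc.mp hk).2]
  refine ⟨fun hji => by rw [key, f_eq_card_filter_Icc_of_le hji], fun hij => ?_⟩
  rw [key, f_eq_card_filter_Icc_add_one hij (hj2.trans (Nat.pow_le_pow_right two_pos i.le_succ))]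
end

section
/- Define g recursively by g(1) = 1 and g(m + 1) = 2^{g(m)} + g(m) for m ≥ 1. Then for every m ≥ 1, g(m) is the minimal value of n with f(n) = m; that is, f(g(m)) = m and f(n) ≠ m for all n with 1 ≤ n < g(m). -/
/-!
Two solutions `k < k'` of `k ≡ n [MOD 2 ^ k]` satisfy `n ≡ k ≡ k' [MOD 2 ^ k]`, so
`k' ≥ 2 ^ k + k`. Since `g` iterates `x ↦ 2 ^ x + x` from `g 0 = 0`, the `i`-th smallest solution
is at least `g i`, whence `g (f n) ≤ n`. Conversely `g m ≡ g j [MOD 2 ^ g j]` for `j ≤ m`, so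
`g 1, …, g m` are solutions for `n = g m` and `m ≤ f (g m)`.
-/

open Finset

/-- `g 1 = 1` and `g (m + 1) = 2 ^ g m + g m` for `m ≥ 1`. -/
def g : ℕ → ℕ
  | 0 => 0
  | 1 => 1
  | (m + 2) => 2 ^ g (m + 1) + g (m + 1)

def selfResidues (n : ℕ) : Finset ℕ := (Icc 1 n).filter (fun k => n % 2 ^ k = k % 2 ^ k)

lemma f_eq_card_selfResidues (n : ℕ) : f n = #(selfResidues n) := rfl

lemma mem_selfResidues {n k : ℕ} : k ∈ selfResidues n ↔ 1 ≤ k ∧ k ≤ n ∧ n ≡ k [MOD 2 ^ k] := by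
  simp only [selfResidues, mem_filter, mem_Icc, and_assoc]
  rfl

lemma two_pow_add_le_of_modEq {n k k' : ℕ} (hk : n ≡ k [MOD 2 ^ k]) (hk' : n ≡ k' [MOD 2 ^ k'])
    (hlt : k < k') : 2 ^ k + k ≤ k' := by
  have hkk' : k ≡ k' [MOD 2 ^ k] := hk.symm.trans (hk'.of_dvd (pow_dvd_pow 2 hlt.le))
  have hdvd : 2 ^ k ∣ k' - k := (Nat.modEq_iff_dvd' hlt.le).mp hkk'
  have := Nat.le_of_dvd (Nat.sub_pos_of_lt hlt) hdvd
  omega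

lemma g_succ (m : ℕ) : g (m + 1) = 2 ^ g m + g m := by
  cases m <;> rfl

lemma g_strictMono : StrictMono g :=
  strictMono_nat_of_lt_succ fun m => by
    rw [g_succ]
    exact Nat.lt_add_of_pos_left (Nat.two_pow_pos _)

lemma g_modEq_of_le {j m : ℕ} (hjm : j ≤ m) : g m ≡ g j [MOD 2 ^ g j] := by
  induction m, hjm using Nat.le_induction with
  | base => rfl
  | succ k hjk ih =>
    have hstep : g (k + 1) ≡ g k [MOD 2 ^ g k] := by
      rw [g_succ]
      exact Nat.modulus_add_modEq_iff.mpr rfl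
    exact (hstep.of_dvd (pow_dvd_pow 2 (g_strictMono.monotone hjk))).trans ih

lemma le_f_g (m : ℕ) : m ≤ f (g m) := by
  have hsub : (Icc 1 m).image g ⊆ selfResidues (g m) := by
    intro x hx
    obtain ⟨j, hj, rfl⟩ := mem_image.mp hx
    obtain ⟨hj1, hjm⟩ := mem_Icc.mp hj
    exact mem_selfResidues.mpr
      ⟨g_strictMono.monotone hj1, g_strictMono.monotone hjm, g_modEq_of_le hjm⟩
  have hcard := card_le_card hsub
  rw [card_image_of_injective _ g_strictMono.injective, Nat.card_Icc] at hcard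
  rw [f_eq_card_selfResidues]
  omega

lemma g_card_le_of_subset_selfResidues {n b : ℕ} {T : Finset ℕ} (hT : T ⊆ selfResidues n)
    (hb : ∀ x ∈ T, x ≤ b) : g #T ≤ b := by
  induction T using Finset.induction_on_max generalizing b with
  | empty => simp [g]
  | insert a s hlt ih =>
    obtain ⟨ha1, -, ha⟩ := mem_selfResidues.mp (hT (mem_insert_self a s))
    have hs : s ⊆ selfResidues n := (subset_insert a s).trans hT
    -- `c = 0` when `s = ∅`; then the gap condition reduces to `1 ≤ a`.
    set c := s.sup id
    have hgc : g #s ≤ c := ih hs fun x hx => le_sup (f := id) hx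
    have hgap : 2 ^ c + c ≤ a := by
      rcases s.eq_empty_or_nonempty with rfl | hne
      · simpa [c] using ha1
      · obtain ⟨x, hx, hxc⟩ := exists_mem_eq_sup s hne id
        obtain ⟨-, -, hxn⟩ := mem_selfResidues.mp (hs hx)
        rw [show c = x from hxc]
        exact two_pow_add_le_of_modEq hxn ha (hlt x hx)
    rw [card_insert_of_notMem fun h => (hlt a h).false, g_succ]
    calc 2 ^ g #s + g #s ≤ 2 ^ c + c := by gcongr; norm_num
      _ ≤ a := hgap
      _ ≤ b := hb a (mem_insert_self a s)

lemma g_f_le (n : ℕ) : g (f n) ≤ n :=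
  g_card_le_of_subset_selfResidues subset_rfl fun _ hx => (mem_selfResidues.mp hx).2.1

theorem g_is_min_index_general (m : ℕ) :
    f (g m) = m ∧ ∀ n : ℕ, 1 ≤ n → n < g m → f n ≠ m := by
  refine ⟨le_antisymm ?_ (le_f_g m), fun n _ hn hfn => ?_⟩
  · by_contra! hlt
    have : g (m + 1) ≤ g m := (g_strictMono.monotone hlt).trans (g_f_le (g m))
    exact (g_strictMono m.lt_succ_self).not_ge this
  · exact (hfn ▸ g_f_le n).not_gt hn

theorem g_is_min_index (m : ℕ) (hm : 1 ≤ m) :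
    f (g m) = m ∧ ∀ n : ℕ, 1 ≤ n → n < g m → f n ≠ m :=
  g_is_min_index_general m
end

section
/- The function f′ satisfies the recurrence f′(0) = 0, f′(1) = 1, and, for all i ≥ 1 and all j with 0 ≤ j ≤ 2^i − 1: f′(2^i + j) = f′(j) + 1 if j = 2^i − i − 1, and f′(2^i + j) = f′(j) otherwise. Moreover, f′(2^n − n) = f(n) for every n ≥ 1. -/
/-!
Since `k ≤ 2 ^ (k - 1)`, a solution `k ≥ 1` of `2 ^ k ∣ n + k` forces `2 ^ (k - 1) ≤ n`.
So for `j < 2 ^ i` the solutions for `2 ^ i + j` satisfy `k ≤ i + 1`. Those with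
`k ≤ i` are the solutions for `j`, as `2 ^ k ∣ 2 ^ i`; and `k = i + 1` is a solution exactly
when `2 ^ i + j + i + 1 = 2 ^ (i + 1)`, the only multiple of `2 ^ (i + 1)` in range. Likewise the
solutions for `2 ^ n - n` satisfy `k ≤ n`, and then `2 ^ k ∣ 2 ^ n - (n - k)` means `k ≡ n`.
-/

/-- `f' n` is the number of integers `k ≥ 1` such that `n + k ≡ 0 (mod 2^k)`.
All such `k` satisfy `k ≤ n`, so this set is finite. -/
def f' (n : ℕ) : ℕ := ((Finset.Icc 1 n).filter (fun k => 2 ^ k ∣ (n + k))).card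

def f'Solutions (n : ℕ) : Finset ℕ := (Finset.Icc 1 n).filter (fun k => 2 ^ k ∣ n + k)

lemma f'_eq_card_f'Solutions (n : ℕ) : f' n = (f'Solutions n).card := rfl

lemma two_pow_pred_le_of_two_pow_dvd_add_self {n k : ℕ} (hk : 1 ≤ k) (h : 2 ^ k ∣ n + k) :
    2 ^ (k - 1) ≤ n := by
  have hle : 2 ^ k ≤ n + k := Nat.le_of_dvd (by omega) h
  have hsplit : 2 ^ k = 2 * 2 ^ (k - 1) := by rw [← pow_succ']; congr 1; omega
  have : k - 1 < 2 ^ (k - 1) := Nat.lt_two_pow_self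
  omega

lemma le_of_two_pow_dvd_add_self_of_lt_two_pow {n k m : ℕ} (hk : 1 ≤ k) (h : 2 ^ k ∣ n + k)
    (hn : n < 2 ^ m) : k ≤ m := by
  have := (Nat.pow_lt_pow_iff_right one_lt_two).1
    ((two_pow_pred_le_of_two_pow_dvd_add_self hk h).trans_lt hn)
  omega

lemma mem_f'Solutions {n k : ℕ} : k ∈ f'Solutions n ↔ 1 ≤ k ∧ 2 ^ k ∣ n + k := by
  simp only [f'Solutions, Finset.mem_filter, Finset.mem_Icc]
  constructor
  · rintro ⟨⟨hk, -⟩, h⟩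
    exact ⟨hk, h⟩
  · rintro ⟨hk, h⟩
    have := two_pow_pred_le_of_two_pow_dvd_add_self hk h
    have : k - 1 < 2 ^ (k - 1) := Nat.lt_two_pow_self
    exact ⟨⟨hk, by omega⟩, h⟩

lemma two_pow_dvd_two_pow_add_add_self_iff {i j k : ℕ} (hj : j < 2 ^ i) (hk : 1 ≤ k) :
    2 ^ k ∣ 2 ^ i + j + k ↔ 2 ^ k ∣ j + k ∨ (k = i + 1 ∧ j + (i + 1) = 2 ^ i) := by
  have hpow : 2 ^ (i + 1) = 2 * 2 ^ i := pow_succ' 2 i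
  have hi : i < 2 ^ i := Nat.lt_two_pow_self
  constructor
  · intro h
    have hki : k ≤ i + 1 := le_of_two_pow_dvd_add_self_of_lt_two_pow hk h (by omega)
    rcases hki.lt_or_eq with hki | rfl
    · rw [add_assoc, Nat.dvd_add_right (pow_dvd_pow 2 (by omega))] at h
      exact Or.inl h
    · have := Nat.eq_of_dvd_of_lt_two_mul (by omega) h (by omega)
      exact Or.inr ⟨rfl, by omega⟩
  · rintro (h | ⟨rfl, h⟩)
    · rw [add_assoc, Nat.dvd_add_right
        (pow_dvd_pow 2 (le_of_two_pow_dvd_add_self_of_lt_two_pow hk h hj))]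
      exact h
    · exact ⟨1, by omega⟩

lemma mem_f'Solutions_two_pow_add {i j k : ℕ} (hj : j < 2 ^ i) :
    k ∈ f'Solutions (2 ^ i + j) ↔
      k ∈ f'Solutions j ∨ (k = i + 1 ∧ j + (i + 1) = 2 ^ i) := by
  rw [mem_f'Solutions, mem_f'Solutions]
  by_cases hk : 1 ≤ k
  · simp only [hk, true_and, two_pow_dvd_two_pow_add_add_self_iff hj hk]
  · have : k ≠ i + 1 := by omega
    simp [hk, this]

lemma succ_notMem_f'Solutions {i j : ℕ} (hj : j < 2 ^ i) : i + 1 ∉ f'Solutions j := by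
  rw [mem_f'Solutions]
  rintro ⟨hk, h⟩
  have := le_of_two_pow_dvd_add_self_of_lt_two_pow hk h hj
  omega

lemma f'_two_pow_add_of_eq {i j : ℕ} (hj : j + (i + 1) = 2 ^ i) :
    f' (2 ^ i + j) = f' j + 1 := by
  have hlt : j < 2 ^ i := by omega
  have hset : f'Solutions (2 ^ i + j) = insert (i + 1) (f'Solutions j) := by
    ext k
    rw [mem_f'Solutions_two_pow_add hlt, Finset.mem_insert]
    tauto
  rw [f'_eq_card_f'Solutions, f'_eq_card_f'Solutions, hset,
    Finset.card_insert_of_notMem (succ_notMem_f'Solutions hlt)]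

lemma f'_two_pow_add_of_ne {i j : ℕ} (hj : j < 2 ^ i) (hne : j + (i + 1) ≠ 2 ^ i) :
    f' (2 ^ i + j) = f' j := by
  have hset : f'Solutions (2 ^ i + j) = f'Solutions j := by
    ext k
    rw [mem_f'Solutions_two_pow_add hj]
    tauto
  rw [f'_eq_card_f'Solutions, f'_eq_card_f'Solutions, hset]

lemma f'Solutions_two_pow_sub_self {n : ℕ} (hn : 1 ≤ n) :
    f'Solutions (2 ^ n - n) = (Finset.Icc 1 n).filter (fun k => n % 2 ^ k = k % 2 ^ k) := by
  have hlt : n < 2 ^ n := Nat.lt_two_pow_self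
  have hdvd_iff : ∀ k ≤ n, 2 ^ k ∣ 2 ^ n - n + k ↔ n % 2 ^ k = k % 2 ^ k := by
    intro k hkn
    rw [show 2 ^ n - n + k = 2 ^ n - (n - k) by omega,
      Nat.dvd_sub_iff_right (by omega) (pow_dvd_pow 2 hkn), ← Nat.modEq_iff_dvd' hkn]
    exact eq_comm
  ext k
  rw [mem_f'Solutions, Finset.mem_filter, Finset.mem_Icc]
  constructor
  · rintro ⟨hk, h⟩
    have hkn : k ≤ n := le_of_two_pow_dvd_add_self_of_lt_two_pow hk h (by omega)
    exact ⟨⟨hk, hkn⟩, (hdvd_iff k hkn).1 h⟩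
  · rintro ⟨⟨hk, hkn⟩, h⟩
    exact ⟨hk, (hdvd_iff k hkn).2 h⟩

theorem f'_recurrence :
    f' 0 = 0 ∧ f' 1 = 1 ∧
      (∀ i : ℕ, 1 ≤ i → ∀ j : ℕ, j ≤ 2 ^ i - 1 →
        (j = 2 ^ i - i - 1 → f' (2 ^ i + j) = f' j + 1) ∧
        (j ≠ 2 ^ i - i - 1 → f' (2 ^ i + j) = f' j)) ∧
      ∀ n : ℕ, 1 ≤ n → f' (2 ^ n - n) = f n := by
  refine ⟨by decide, by decide, fun i _ j hj => ?_, fun n hn => ?_⟩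
  · have hi : i < 2 ^ i := Nat.lt_two_pow_self
    exact ⟨fun _ => f'_two_pow_add_of_eq (i := i) (j := j) (by omega),
      fun _ => f'_two_pow_add_of_ne (i := i) (j := j) (by omega) (by omega)⟩
  · rw [f'_eq_card_f'Solutions, f'Solutions_two_pow_sub_self hn, f]
end
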